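/- arXiv:1809.10508 — 2 statements merged into one kernel-verified Lean document; each statement's English description precedes it below -/
import Mathlib

section
/- Let G be a cube-free median graph and let T be a tree subgraph of G rooted at a vertex r such that T has gated branches, i.e., for every vertex x of T the unique path of T from x to r is a gated set of G. Then T is quasigated: for every vertex u of G not in T, the imprint set Imp(u, T) = {a ∈ V(T) : I(u,a) ∩ V(T) = {a}} has at most two elements. -/
open SimpleGraph Set

/-- The metric interval `I(u,v)` in a graph `G`. -/
def gInterval {V : Type*} (G : SimpleGraph V) (u v : V) : Set V :=
  {w | G.dist u w + G.dist w v = G.dist u v}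

/-- A median graph: a connected graph in which every triplet of vertices has a
unique median, i.e. a unique vertex in `I(x,y) ∩ I(y,z) ∩ I(z,x)`. -/
def MedianGraph {V : Type*} (G : SimpleGraph V) : Prop :=
  G.Connected ∧ ∀ x y z : V,
    ∃! m : V, m ∈ gInterval G x y ∧ m ∈ gInterval G y z ∧ m ∈ gInterval G z x

/-- `G` contains an induced `d`-dimensional hypercube all of whose vertices lie in `S`. -/
def HasCubeIn {V : Type*} (G : SimpleGraph V) (d : ℕ) (S : Set V) : Prop :=
  ∃ f : Finset (Fin d) → V, Function.Injective f ∧ (∀ A, f A ∈ S) ∧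
    ∀ A B : Finset (Fin d), G.Adj (f A) (f B) ↔ (symmDiff A B).card = 1

/-- `G` contains an induced `d`-dimensional hypercube `Q_d`. -/
def HasInducedCube {V : Type*} (G : SimpleGraph V) (d : ℕ) : Prop :=
  HasCubeIn G d Set.univ

/-- A cube-free (median) graph: no induced 3-dimensional hypercube. -/
def CubeFree {V : Type*} (G : SimpleGraph V) : Prop :=
  ¬ HasInducedCube G 3

/-- `g` is a gate of `v` in the set `S`. -/
def IsGate {V : Type*} (G : SimpleGraph V) (S : Set V) (v g : V) : Prop :=
  g ∈ S ∧ ∀ u ∈ S, G.dist v u = G.dist v g + G.dist g u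

/-- A set of vertices is gated if every vertex has a gate in it. -/
def Gated {V : Type*} (G : SimpleGraph V) (S : Set V) : Prop :=
  ∀ v : V, ∃ g : V, IsGate G S v g

/-- A set of vertices is convex if it contains the interval between any two of its members. -/
def GConvex {V : Type*} (G : SimpleGraph V) (S : Set V) : Prop :=
  ∀ u ∈ S, ∀ v ∈ S, gInterval G u v ⊆ S

/-- The star `St(z)`: the set of vertices lying in some induced hypercube of `G`
containing `z`. -/
def gStar {V : Type*} (G : SimpleGraph V) (z : V) : Set V :=
  {v | ∃ (d : ℕ) (f : Finset (Fin d) → V), Function.Injective f ∧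
      (∀ A B : Finset (Fin d), G.Adj (f A) (f B) ↔ (symmDiff A B).card = 1) ∧
      (∃ A, f A = z) ∧ (∃ A, f A = v)}

/-- The fiber `F(x)` of `x` with respect to a (gated) set `H`: all vertices having `x`
as their gate in `H`. -/
def fiber {V : Type*} (G : SimpleGraph V) (H : Set V) (x : V) : Set V :=
  {v | IsGate G H v x}

/-- Two fibers are neighboring when an edge of `G` joins them. -/
def Neighboring {V : Type*} (G : SimpleGraph V) (H : Set V) (x y : V) : Prop :=
  ∃ a ∈ fiber G H x, ∃ b ∈ fiber G H y, G.Adj a b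

/-- The boundary `∂_y F(x)`: vertices of `F(x)` having a neighbor in `F(y)`. -/
def bdry {V : Type*} (G : SimpleGraph V) (H : Set V) (x y : V) : Set V :=
  {a | a ∈ fiber G H x ∧ ∃ b ∈ fiber G H y, G.Adj a b}

/-- The total boundary `∂*F(x)`: union of the boundaries `∂_y F(x)` over all `y ∈ H`
adjacent to `x`. -/
def totalBdry {V : Type*} (G : SimpleGraph V) (H : Set V) (x : V) : Set V :=
  ⋃ (y : V) (_ : y ∈ H ∧ G.Adj x y), bdry G H x y

/-- The imprint set of `u` on `A`. -/
def imprints {V : Type*} (G : SimpleGraph V) (u : V) (A : Set V) : Set V :=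
  {a ∈ A | gInterval G u a ∩ A = {a}}

/-- The halfspace `W(u,v)` associated with an edge `uv`. -/
def halfspaceW {V : Type*} (G : SimpleGraph V) (u v : V) : Set V :=
  {z | G.dist z u < G.dist z v}

open SimpleGraph

/-!
Root the graph at a vertex `u` and order it by `a ≤ b ↔ a ∈ I(u, b)`, with height `d(u, ·)`.
In a median graph the meet of `x, y` is the median `m(x, y, u)`, the join of `x, y ≤ t` is
`m(x, y, t)`, heights obey the modular law, and every interval `I(u, t)` is distributive: an
element of height two covers at most two atoms (else `u` and it are two medians of the atoms),
which drives an induction on heights.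

Suppose `u` has three imprints `y₁, y₂, y₃` on `T`. Rooting at their meet instead keeps them
imprints. If two of them, `y₁` and `y₃`, have meet the root, the branch of `y₂` is gated, hence
convex, and a path, hence a chain; it contains `y₁ ⊔ y₂` and `y₂ ⊔ y₃`, and whichever is lower,
distributivity puts `y₁` or `y₃` below `y₂`, against the imprint property. Otherwise the three
pairwise meets contain distinct atoms, which span three squares at the root closing up to an
induced 3-cube.
-/

section

variable {V : Type*} {G : SimpleGraph V}

section Interval

lemma mem_gInterval_iff {u v w : V} :
    w ∈ gInterval G u v ↔ G.dist u w + G.dist w v = G.dist u v :=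
  Iff.rfl

lemma mem_gInterval_symm {u v w : V} (h : w ∈ gInterval G u v) : w ∈ gInterval G v u := by
  rw [mem_gInterval_iff, dist_comm, add_comm, dist_comm (u := w), dist_comm (u := v)]
  exact h

lemma left_mem_gInterval (u v : V) : u ∈ gInterval G u v := by
  simp [mem_gInterval_iff]

lemma right_mem_gInterval (u v : V) : v ∈ gInterval G u v := by
  simp [mem_gInterval_iff]

lemma dist_le_of_mem_gInterval {u v w : V} (h : w ∈ gInterval G u v) :
    G.dist u w ≤ G.dist u v :=
  h ▸ Nat.le_add_right _ _

lemma two_mul_dist_eq_of_mem_gInterval {u z w J : V} (hz : z ∈ gInterval G u J)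
    (hw : w ∈ gInterval G u J) (hJ : J ∈ gInterval G z w) :
    2 * G.dist u J = G.dist u z + G.dist u w + G.dist z w := by
  rw [mem_gInterval_iff] at hz hw hJ
  rw [dist_comm (u := w)] at hw
  omega

lemma mem_gInterval_of_adj_of_adj {a b x : V} (hab : G.dist a b = 2) (hax : G.Adj a x)
    (hxb : G.Adj x b) : x ∈ gInterval G a b := by
  rw [mem_gInterval_iff, dist_eq_one_iff_adj.2 hax, dist_eq_one_iff_adj.2 hxb, hab]

lemma mem_gInterval_of_mem_support {W : Type*} {H : SimpleGraph W} (hH : H.Connected)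
    {a b c : W} (p : H.Walk a b) (hp : p.length = H.dist a b) (hc : c ∈ p.support) :
    c ∈ gInterval H a b := by
  classical
  have hlen := congrArg Walk.length (p.take_spec hc)
  rw [Walk.length_append] at hlen
  have := dist_le (p.takeUntil c hc)
  have := dist_le (p.dropUntil c hc)
  have := hH.dist_triangle (u := a) (v := c) (w := b)
  rw [mem_gInterval_iff]
  omega

variable (hc : G.Connected)
include hc

lemma eq_of_mem_gInterval_of_dist_eq {u v w : V} (h : w ∈ gInterval G u v)
    (he : G.dist u w = G.dist u v) : w = v :=
  hc.dist_eq_zero_iff.1 (by rw [mem_gInterval_iff] at h; omega)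

lemma eq_of_mem_gInterval_self {x w : V} (h : w ∈ gInterval G x x) : w = x :=
  (hc.dist_eq_zero_iff.1 (by rw [mem_gInterval_iff, dist_self] at h; omega)).symm

lemma gInterval_antisymm {u a b : V} (hab : a ∈ gInterval G u b) (hba : b ∈ gInterval G u a) :
    a = b :=
  eq_of_mem_gInterval_of_dist_eq hc hab
    (le_antisymm (dist_le_of_mem_gInterval hab) (dist_le_of_mem_gInterval hba))

lemma mem_gInterval_trans {u a b c : V} (hab : a ∈ gInterval G u b)
    (hbc : b ∈ gInterval G u c) : a ∈ gInterval G u c := by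
  rw [mem_gInterval_iff] at hab hbc ⊢
  have := hc.dist_triangle (u := u) (v := a) (w := c)
  have := hc.dist_triangle (u := a) (v := b) (w := c)
  omega

lemma mem_gInterval_trans_upper {u b c w : V} (hb : b ∈ gInterval G u c)
    (hw : w ∈ gInterval G b c) : w ∈ gInterval G u c ∧ b ∈ gInterval G u w := by
  simp only [mem_gInterval_iff] at hb hw ⊢
  have := hc.dist_triangle (u := u) (v := b) (w := w)
  have := hc.dist_triangle (u := u) (v := w) (w := c)
  omega

lemma mem_gInterval_trans_lower {u b c w : V} (hb : b ∈ gInterval G u c)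
    (hw : w ∈ gInterval G u b) : w ∈ gInterval G u c ∧ b ∈ gInterval G w c := by
  simp only [mem_gInterval_iff] at hb hw ⊢
  have := hc.dist_triangle (u := w) (v := b) (w := c)
  have := hc.dist_triangle (u := u) (v := w) (w := c)
  omega

lemma exists_dist_eq_one_mem_gInterval {x y : V} (h : x ≠ y) :
    ∃ t, G.dist x t = 1 ∧ t ∈ gInterval G x y := by
  obtain ⟨p, hp⟩ := hc.exists_walk_length_eq_dist x y
  cases p with
  | nil => exact absurd rfl h
  | @cons _ t _ hxt rest =>
    have hxt1 := dist_eq_one_iff_adj.2 hxt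
    refine ⟨t, hxt1, ?_⟩
    have := dist_le rest
    have := hc.dist_triangle (u := x) (v := t) (w := y)
    rw [Walk.length_cons] at hp
    rw [mem_gInterval_iff]
    omega

end Interval

section Gate

lemma isGate_self {S : Set V} {v : V} (hv : v ∈ S) : IsGate G S v v :=
  ⟨hv, fun _ _ => by simp⟩

lemma IsGate.mem_gInterval {S : Set V} {v g w : V} (h : IsGate G S v g) (hw : w ∈ S) :
    g ∈ gInterval G v w :=
  (h.2 w hw).symm

lemma IsGate.trans {S S' : Set V} {x g g' : V} (h : IsGate G S x g) (hS : S' ⊆ S)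
    (h' : IsGate G S' g g') : IsGate G S' x g' := by
  refine ⟨h'.1, fun y hy => ?_⟩
  rw [h.2 y (hS hy), h'.2 y hy, h.2 g' (hS h'.1)]
  ring

variable (hc : G.Connected)
include hc

lemma Gated.gConvex {S : Set V} (hS : Gated G S) : GConvex G S := by
  intro a ha b hb w hw
  obtain ⟨g, hg⟩ := hS w
  have := hg.2 a ha
  have := hg.2 b hb
  have := hc.dist_triangle (u := a) (v := g) (w := b)
  have : G.dist a w = G.dist w a := dist_comm
  have : G.dist a g = G.dist g a := dist_comm
  rw [mem_gInterval_iff] at hw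
  rw [hc.dist_eq_zero_iff.1 (by omega : G.dist w g = 0)]
  exact hg.1

lemma Gated.isGate_of_adj {S : Set V} (hS : Gated G S) {x x' : V} (hadj : G.Adj x x')
    (hx' : x' ∈ S) (hx : x ∉ S) : IsGate G S x x' := by
  obtain ⟨g, hg⟩ := hS x
  have := hc.pos_dist_of_ne fun h : x = g => hx (h ▸ hg.1)
  have := hg.2 x' hx'
  rw [dist_eq_one_iff_adj.2 hadj] at this
  rwa [← hc.dist_eq_zero_iff.1 (by omega : G.dist g x' = 0)]

lemma mem_imprints_of_mem_gInterval {A : Set V} {u y g : V} (hy : y ∈ imprints G u A)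
    (hg : g ∈ gInterval G u y) : y ∈ imprints G g A := by
  refine ⟨hy.1, Set.eq_singleton_iff_unique_mem.2 ⟨⟨right_mem_gInterval g y, hy.1⟩, ?_⟩⟩
  rintro w ⟨hw, hwA⟩
  have : w ∈ gInterval G u y ∩ A := ⟨(mem_gInterval_trans_upper hc hg hw).1, hwA⟩
  rwa [hy.2] at this

end Gate

section Cube

open Finset

lemma dist_le_card_symmDiff {d : ℕ} (hc : G.Connected) (f : Finset (Fin d) → V)
    (hadj : ∀ A i, G.Adj (f A) (f (symmDiff A {i}))) (A B : Finset (Fin d)) :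
    G.dist (f A) (f B) ≤ #(symmDiff A B) := by
  induction hn : #(symmDiff A B) generalizing A with
  | zero => simp [symmDiff_eq_bot.1 (card_eq_zero.1 hn)]
  | succ n IH =>
    obtain ⟨i, hi⟩ := card_pos.1 (by omega : 0 < #(symmDiff A B))
    have hA' : #(symmDiff (symmDiff A {i}) B) = n := by
      rw [symmDiff_right_comm, show symmDiff (symmDiff A B) {i} = (symmDiff A B).erase i by
        ext j; by_cases hj : j = i <;> simp [Finset.mem_symmDiff, hj, hi],
        card_erase_of_mem hi, hn, Nat.add_sub_cancel]
    have := hc.dist_triangle (u := f A) (v := f (symmDiff A {i})) (w := f B)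
    rw [dist_eq_one_iff_adj.2 (hadj A i)] at this
    have := IH _ hA'
    omega

/-- The triangle inequality through `f Aᶜ` makes `f` isometric: `dist (f A) (f B) = #(A ∆ B)`. -/
theorem hasInducedCube_of_adj_of_dist_compl {d : ℕ} (hc : G.Connected) (f : Finset (Fin d) → V)
    (hadj : ∀ A i, G.Adj (f A) (f (symmDiff A {i})))
    (hanti : ∀ A, G.dist (f A) (f Aᶜ) = d) : HasInducedCube G d := by
  have hdist : ∀ A B, G.dist (f A) (f B) = #(symmDiff A B) := by
    intro A B
    have hcompl : #(symmDiff B Aᶜ) = d - #(symmDiff A B) := by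
      rw [show symmDiff B Aᶜ = (symmDiff A B)ᶜ by ext j; simp [Finset.mem_symmDiff]; tauto,
        card_compl, Fintype.card_fin]
    have := hc.dist_triangle (u := f A) (v := f B) (w := f Aᶜ)
    have := dist_le_card_symmDiff hc f hadj A B
    have := dist_le_card_symmDiff hc f hadj B Aᶜ
    have := hanti A
    have := card_le_univ (symmDiff A B)
    rw [Fintype.card_fin] at this
    omega
  refine ⟨f, fun A B h => ?_, fun _ => Set.mem_univ _, fun A B => ?_⟩
  · have := hdist A B
    rw [h, dist_self] at this
    exact symmDiff_eq_bot.1 (card_eq_zero.1 this.symm)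
  · rw [← dist_eq_one_iff_adj, hdist]

def cubeMap (v p q s wpq wps wqs z : V) (A : Finset (Fin 3)) : V :=
  if 0 ∈ A then if 1 ∈ A then if 2 ∈ A then z else wpq else if 2 ∈ A then wps else p
  else if 1 ∈ A then if 2 ∈ A then wqs else q else if 2 ∈ A then s else v

theorem hasInducedCube_three (hc : G.Connected) {v p q s wpq wps wqs z : V}
    (hvp : G.Adj v p) (hvq : G.Adj v q) (hvs : G.Adj v s)
    (hp₁ : G.Adj p wpq) (hq₁ : G.Adj q wpq) (hp₂ : G.Adj p wps) (hs₂ : G.Adj s wps)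
    (hq₃ : G.Adj q wqs) (hs₃ : G.Adj s wqs)
    (hz₁ : G.Adj wpq z) (hz₂ : G.Adj wps z) (hz₃ : G.Adj wqs z)
    (hv : G.dist v z = 3) (hp : G.dist p wqs = 3) (hq : G.dist q wps = 3)
    (hs : G.dist s wpq = 3) : HasInducedCube G 3 := by
  refine hasInducedCube_of_adj_of_dist_compl hc (cubeMap v p q s wpq wps wqs z) ?_ ?_
  · intro A i
    fin_cases A <;> fin_cases i <;> simp +decide [cubeMap] <;>
      first | assumption | exact G.adj_symm ‹_›
  · intro A
    fin_cases A <;> simp +decide [cubeMap] <;>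
      first | assumption | exact dist_comm.trans (by assumption)

end Cube

namespace MedianGraph

variable (hG : MedianGraph G)
include hG

lemma connected : G.Connected := hG.1

noncomputable def median (x y z : V) : V := (hG.2 x y z).exists.choose

lemma median_mem (x y z : V) :
    hG.median x y z ∈ gInterval G x y ∧ hG.median x y z ∈ gInterval G y z ∧
      hG.median x y z ∈ gInterval G z x :=
  (hG.2 x y z).exists.choose_spec

lemma median_eq {x y z m : V} (h1 : m ∈ gInterval G x y) (h2 : m ∈ gInterval G y z)
    (h3 : m ∈ gInterval G z x) : hG.median x y z = m :=
  (hG.2 x y z).unique (hG.median_mem x y z) ⟨h1, h2, h3⟩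

lemma median_unique {x y z m m' : V} (h1 : m ∈ gInterval G x y) (h2 : m ∈ gInterval G y z)
    (h3 : m ∈ gInterval G z x) (h1' : m' ∈ gInterval G x y) (h2' : m' ∈ gInterval G y z)
    (h3' : m' ∈ gInterval G z x) : m = m' :=
  (hG.median_eq h1 h2 h3).symm.trans (hG.median_eq h1' h2' h3')

lemma even_dist_add_dist_add_dist (x y z : V) :
    Even (G.dist x y + G.dist y z + G.dist z x) := by
  obtain ⟨h1, h2, h3⟩ := hG.median_mem x y z
  rw [mem_gInterval_iff] at h1 h2 h3
  rw [← h1, ← h2, ← h3, dist_comm (u := hG.median x y z) (v := x),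
    dist_comm (u := hG.median x y z) (v := y), dist_comm (u := hG.median x y z) (v := z)]
  exact ⟨G.dist x (hG.median x y z) + G.dist y (hG.median x y z) +
    G.dist z (hG.median x y z), by ring⟩

noncomputable def meet (u x y : V) : V := hG.median x y u

lemma meet_mem_left (u x y : V) : hG.meet u x y ∈ gInterval G u x :=
  (hG.median_mem x y u).2.2

lemma meet_mem_right (u x y : V) : hG.meet u x y ∈ gInterval G u y :=
  mem_gInterval_symm (hG.median_mem x y u).2.1

lemma meet_mem_gInterval (u x y : V) : hG.meet u x y ∈ gInterval G x y :=
  (hG.median_mem x y u).1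

lemma meet_eq {u x y m : V} (hx : m ∈ gInterval G u x) (hy : m ∈ gInterval G u y)
    (hxy : m ∈ gInterval G x y) : hG.meet u x y = m :=
  hG.median_eq hxy (mem_gInterval_symm hy) hx

lemma meet_comm (u x y : V) : hG.meet u x y = hG.meet u y x :=
  (hG.meet_eq (hG.meet_mem_right u x y) (hG.meet_mem_left u x y)
    (mem_gInterval_symm (hG.meet_mem_gInterval u x y))).symm

lemma meet_self_left (u y : V) : hG.meet u u y = u :=
  hG.meet_eq (left_mem_gInterval u u) (left_mem_gInterval u y) (left_mem_gInterval u y)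

lemma mem_gInterval_meet {u x y w : V} (hx : w ∈ gInterval G u x) (hy : w ∈ gInterval G u y) :
    w ∈ gInterval G u (hG.meet u x y) := by
  obtain ⟨hz, hzy, hzx⟩ := hG.median_mem x y w
  have h1 := mem_gInterval_trans_upper hG.connected hx hzx
  have h2 := mem_gInterval_trans_upper hG.connected hy (mem_gInterval_symm hzy)
  rw [hG.meet_eq h1.1 h2.1 hz]
  exact h1.2

lemma meet_eq_base_of_le {u x y z : V} (h : hG.meet u x z = u) (hy : y ∈ gInterval G u x) :
    hG.meet u y z = u := by
  have := hG.mem_gInterval_meet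
    (mem_gInterval_trans hG.connected (hG.meet_mem_left u y z) hy)
    (hG.meet_mem_right u y z)
  rw [h] at this
  exact eq_of_mem_gInterval_self hG.connected this

lemma meet_eq_base_of_not_mem {u t z : V} (ht : G.dist u t = 1) (htz : t ∉ gInterval G u z) :
    hG.meet u t z = u := by
  have hm := hG.meet_mem_left u t z
  rcases Nat.lt_or_ge (G.dist u (hG.meet u t z)) 1 with h | h
  · exact (hG.connected.dist_eq_zero_iff.1 (by omega)).symm
  · refine absurd ?_ htz
    rw [← eq_of_mem_gInterval_of_dist_eq hG.connected hm
      (le_antisymm (ht ▸ dist_le_of_mem_gInterval hm) (ht ▸ h))]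
    exact hG.meet_mem_right u t z

lemma meet_eq_meet_of_le {u t x y : V} (hx : t ∈ gInterval G u x) (hy : t ∈ gInterval G u y) :
    hG.meet t x y = hG.meet u x y := by
  have ht := hG.mem_gInterval_meet hx hy
  exact hG.meet_eq (mem_gInterval_trans_lower hG.connected (hG.meet_mem_left u x y) ht).2
    (mem_gInterval_trans_lower hG.connected (hG.meet_mem_right u x y) ht).2
    (hG.meet_mem_gInterval u x y)

lemma median_comm (x y z : V) : hG.median x y z = hG.median y x z := by
  obtain ⟨h₁, h₂, h₃⟩ := hG.median_mem y x z
  exact hG.median_eq (mem_gInterval_symm h₁) (mem_gInterval_symm h₃) (mem_gInterval_symm h₂)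

lemma median_mem_of_le {u x y t : V} (hx : x ∈ gInterval G u t) (hy : y ∈ gInterval G u t) :
    x ∈ gInterval G u (hG.median x y t) ∧ y ∈ gInterval G u (hG.median x y t) ∧
      hG.median x y t ∈ gInterval G u t := by
  obtain ⟨-, hyt, htx⟩ := hG.median_mem x y t
  have hx' := mem_gInterval_trans_upper hG.connected hx (mem_gInterval_symm htx)
  exact ⟨hx'.2, (mem_gInterval_trans_upper hG.connected hy hyt).2, hx'.1⟩

lemma dist_meet_add_dist_of_mem_gInterval {u x y J : V} (hx : x ∈ gInterval G u J)
    (hy : y ∈ gInterval G u J) (hJ : J ∈ gInterval G x y) :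
    G.dist u (hG.meet u x y) + G.dist u J = G.dist u x + G.dist u y := by
  have hJ2 := two_mul_dist_eq_of_mem_gInterval hx hy hJ
  have m1 := hG.meet_mem_left u x y
  have m2 := hG.meet_mem_right u x y
  have m3 := hG.meet_mem_gInterval u x y
  rw [mem_gInterval_iff] at m1 m2 m3
  rw [dist_comm (u := x)] at m3
  omega

lemma dist_meet_add_dist_median {u x y t : V} (hx : x ∈ gInterval G u t)
    (hy : y ∈ gInterval G u t) :
    G.dist u (hG.meet u x y) + G.dist u (hG.median x y t) = G.dist u x + G.dist u y :=
  have h := hG.median_mem_of_le hx hy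
  hG.dist_meet_add_dist_of_mem_gInterval h.1 h.2.1 (hG.median_mem x y t).1

lemma dist_add_dist_le {u x y W : V} (hx : x ∈ gInterval G u W) (hy : y ∈ gInterval G u W) :
    G.dist u x + G.dist u y ≤ G.dist u W + G.dist u (hG.meet u x y) := by
  have := hG.dist_meet_add_dist_median hx hy
  have := dist_le_of_mem_gInterval (hG.median_mem_of_le hx hy).2.2
  omega

lemma mem_gInterval_of_dist_add_eq {u x y J : V} (hx : x ∈ gInterval G u J)
    (hy : y ∈ gInterval G u J)
    (hJ : G.dist u J + G.dist u (hG.meet u x y) = G.dist u x + G.dist u y) :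
    J ∈ gInterval G x y := by
  have m1 := hG.meet_mem_left u x y
  have m2 := hG.meet_mem_right u x y
  have m3 := hG.meet_mem_gInterval u x y
  rw [mem_gInterval_iff] at m1 m2 m3 hx hy ⊢
  have : G.dist x (hG.meet u x y) = G.dist (hG.meet u x y) x := dist_comm
  have : G.dist J y = G.dist y J := dist_comm
  omega

lemma median_mem_gInterval_of_le {u x y t v : V} (hx : x ∈ gInterval G u t)
    (hy : y ∈ gInterval G u t) (hxv : x ∈ gInterval G u v) (hyv : y ∈ gInterval G u v) :
    hG.median x y t ∈ gInterval G u v := by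
  have hJ := hG.median_mem_of_le hx hy
  have hxμ := hG.mem_gInterval_meet hJ.1 hxv
  have hyμ := hG.mem_gInterval_meet hJ.2.1 hyv
  have hμJ := hG.meet_mem_left u (hG.median x y t) v
  have := hG.dist_meet_add_dist_median hx hy
  have := hG.dist_meet_add_dist_median hxμ hyμ
  have := dist_le_of_mem_gInterval (hG.median_mem_of_le hxμ hyμ).2.2
  have := dist_le_of_mem_gInterval hμJ
  rw [← eq_of_mem_gInterval_of_dist_eq hG.connected hμJ (by omega)]
  exact hG.meet_mem_right u _ v

lemma dist_eq_two_of_dist_eq_one {a b c : V} (hab : a ≠ b) (hac : G.dist a c = 1)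
    (hcb : G.dist c b = 1) : G.dist a b = 2 := by
  obtain ⟨k, hk⟩ := hG.even_dist_add_dist_add_dist a b c
  have := hG.connected.dist_triangle (u := a) (v := c) (w := b)
  have := hG.connected.pos_dist_of_ne hab
  have : G.dist b c = 1 := dist_comm.trans hcb
  have : G.dist c a = G.dist a c := dist_comm
  omega

lemma dist_eq_three_of_dist_eq_two {a b c : V} (hab : G.dist a b ≠ 1) (hac : G.dist a c = 2)
    (hcb : G.dist c b = 1) : G.dist a b = 3 := by
  obtain ⟨k, hk⟩ := hG.even_dist_add_dist_add_dist a b c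
  have := hG.connected.dist_triangle (u := a) (v := c) (w := b)
  have : G.dist b c = 1 := dist_comm.trans hcb
  have : G.dist c a = G.dist a c := dist_comm
  omega

lemma mem_gInterval_of_join {z₁ z₃ J v : V} {u : V} (h₁ : z₁ ∈ gInterval G u J)
    (h₃ : z₃ ∈ gInterval G u J) (hJ : J ∈ gInterval G z₁ z₃) (h₁v : z₁ ∈ gInterval G u v)
    (h₃v : z₃ ∈ gInterval G u v) : J ∈ gInterval G u v := by
  have := hG.median_mem_gInterval_of_le h₁ h₃ h₁v h₃v
  rwa [hG.median_eq hJ (right_mem_gInterval z₃ J) (left_mem_gInterval J z₁)] at this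

lemma false_of_three_atoms {u g a b c : V} (hg : G.dist u g = 2) (ha : G.dist u a = 1)
    (hb : G.dist u b = 1) (hc : G.dist u c = 1) (hab : a ≠ b) (hbc : b ≠ c) (hca : c ≠ a)
    (hag : a ∈ gInterval G u g) (hbg : b ∈ gInterval G u g) (hcg : c ∈ gInterval G u g) :
    False := by
  have dab := hG.dist_eq_two_of_dist_eq_one hab (dist_comm.trans ha) hb
  have dbc := hG.dist_eq_two_of_dist_eq_one hbc (dist_comm.trans hb) hc
  have dca := hG.dist_eq_two_of_dist_eq_one hca (dist_comm.trans hc) ha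
  rw [mem_gInterval_iff] at hag hbg hcg
  have : G.dist g a = G.dist a g := dist_comm
  have : G.dist g b = G.dist b g := dist_comm
  have : G.dist g c = G.dist c g := dist_comm
  have : G.dist a u = 1 := dist_comm.trans ha
  have : G.dist b u = 1 := dist_comm.trans hb
  have : G.dist c u = 1 := dist_comm.trans hc
  have hug : u = g := hG.median_unique (x := a) (y := b) (z := c)
    (by rw [mem_gInterval_iff]; omega) (by rw [mem_gInterval_iff]; omega)
    (by rw [mem_gInterval_iff]; omega) (by rw [mem_gInterval_iff]; omega)
    (by rw [mem_gInterval_iff]; omega) (by rw [mem_gInterval_iff]; omega)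
  simp [← hug] at hg

lemma dist_meet_eq_one {u g t z W : V} (hg : G.dist u g = 2) (ht : G.dist u t = 1)
    (htg : t ∈ gInterval G u g) (htz : t ∉ gInterval G u z) (hgW : g ∈ gInterval G u W)
    (hzW : z ∈ gInterval G u W) (hW : G.dist u W = G.dist u z + 1) :
    G.dist u (hG.meet u g z) = 1 := by
  have hq := hG.meet_mem_left u g z
  have hqt : hG.meet u (hG.meet u g z) t = u := by
    rw [hG.meet_comm]
    refine hG.meet_eq_base_of_not_mem ht fun h => htz ?_
    exact mem_gInterval_trans hG.connected h (hG.meet_mem_right u g z)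
  have hup := hG.dist_add_dist_le hq htg
  have hlow := hG.dist_add_dist_le hgW hzW
  rw [hqt, dist_self] at hup
  omega

section Join

variable {u z₁ z₃ J : V} (h₁₃ : hG.meet u z₁ z₃ = u) (h₁ : z₁ ∈ gInterval G u J)
  (h₃ : z₃ ∈ gInterval G u J) (hJ : J ∈ gInterval G z₁ z₃)
include h₁₃ h₁ h₃ hJ

lemma dist_eq_add_of_meet_eq : G.dist u J = G.dist u z₁ + G.dist u z₃ := by
  have := hG.dist_meet_add_dist_of_mem_gInterval h₁ h₃ hJ
  rw [h₁₃, dist_self] at this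
  omega

/-- Otherwise `t`, `g ⊓ z₁` and `g ⊓ z₃` are three atoms below `g = (t ⊔ z₁) ⊓ (t ⊔ z₃)`, which
has height two. -/
lemma mem_gInterval_or_mem_gInterval_of_atom {t : V} (ht : G.dist u t = 1)
    (htJ : t ∈ gInterval G u J) : t ∈ gInterval G u z₁ ∨ t ∈ gInterval G u z₃ := by
  by_contra! hcon
  obtain ⟨ht₁, ht₃⟩ := hcon
  have hJh := hG.dist_eq_add_of_meet_eq h₁₃ h₁ h₃ hJ
  have hW₁ := hG.median_mem_of_le htJ h₁
  have hW₃ := hG.median_mem_of_le htJ h₃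
  have hW₁h := hG.dist_meet_add_dist_median htJ h₁
  have hW₃h := hG.dist_meet_add_dist_median htJ h₃
  rw [hG.meet_eq_base_of_not_mem ht ht₁, dist_self] at hW₁h
  rw [hG.meet_eq_base_of_not_mem ht ht₃, dist_self] at hW₃h
  have hJW := hG.mem_gInterval_of_join h₁ h₃ hJ
    (mem_gInterval_trans hG.connected hW₁.2.1 (hG.median_mem_of_le hW₁.2.2 hW₃.2.2).1)
    (mem_gInterval_trans hG.connected hW₃.2.1 (hG.median_mem_of_le hW₁.2.2 hW₃.2.2).2.1)
  have hgh : G.dist u (hG.meet u (hG.median t z₁ J) (hG.median t z₃ J)) = 2 := by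
    have := hG.dist_meet_add_dist_median hW₁.2.2 hW₃.2.2
    have := dist_le_of_mem_gInterval hJW
    have := dist_le_of_mem_gInterval (hG.median_mem_of_le hW₁.2.2 hW₃.2.2).2.2
    omega
  set g := hG.meet u (hG.median t z₁ J) (hG.median t z₃ J)
  have htg : t ∈ gInterval G u g := hG.mem_gInterval_meet hW₁.1 hW₃.1
  have hq₁ := hG.dist_meet_eq_one hgh ht htg ht₁ (hG.meet_mem_left _ _ _) hW₁.2.1 (by omega)
  have hq₃ := hG.dist_meet_eq_one hgh ht htg ht₃ (hG.meet_mem_right _ _ _) hW₃.2.1 (by omega)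
  refine hG.false_of_three_atoms hgh ht hq₁ hq₃ ?_ ?_ ?_ htg (hG.meet_mem_left _ _ _)
    (hG.meet_mem_left _ _ _)
  · exact fun h => ht₁ (h ▸ hG.meet_mem_right u g z₁)
  · intro h
    have := hG.mem_gInterval_meet (hG.meet_mem_right u g z₁) (h ▸ hG.meet_mem_right u g z₃)
    rw [h₁₃] at this
    rw [eq_of_mem_gInterval_self hG.connected this, dist_self] at hq₁
    exact absurd hq₁ zero_ne_one
  · exact fun h => ht₃ (h ▸ hG.meet_mem_right u g z₃)

end Join

lemma eq_of_meet_eq_base {u x y t : V} (h : hG.meet u x y = u) (hx : t ∈ gInterval G u x)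
    (hy : t ∈ gInterval G u y) : t = u := by
  have := hG.mem_gInterval_meet hx hy
  rw [h] at this
  exact eq_of_mem_gInterval_self hG.connected this

lemma dist_median_eq_add_one {u t z J : V} (ht : G.dist u t = 1) (htz : t ∉ gInterval G u z)
    (htJ : t ∈ gInterval G u J) (hzJ : z ∈ gInterval G u J) :
    G.dist u (hG.median t z J) = G.dist u z + 1 := by
  have := hG.dist_meet_add_dist_median htJ hzJ
  rw [hG.meet_eq_base_of_not_mem ht htz, dist_self] at this
  omega

/-- Modularity: for `t ≤ z`, `z ⊓ (t ⊔ z₃) = t ⊔ (z ⊓ z₃)`, read off on heights. -/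
lemma dist_meet_median_eq {u t z z₃ J : V} (ht : G.dist u t = 1) (htz : t ∈ gInterval G u z)
    (ht₃ : t ∉ gInterval G u z₃) (hzJ : z ∈ gInterval G u J) (h₃ : z₃ ∈ gInterval G u J) :
    G.dist u (hG.meet u z (hG.median t z₃ J)) = G.dist u (hG.meet u z z₃) + 1 := by
  have htJ := mem_gInterval_trans hG.connected htz hzJ
  have hz₃' := hG.median_mem_of_le htJ h₃
  have hz₃'h := hG.dist_median_eq_add_one ht ht₃ htJ h₃
  have hγz := hG.meet_mem_left u z z₃
  have hγ₃ := hG.meet_mem_right u z z₃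
  have hγ'z := hG.meet_mem_left u z (hG.median t z₃ J)
  have hγ'₃ := hG.meet_mem_right u z (hG.median t z₃ J)
  have hγγ' := hG.mem_gInterval_meet hγz
    (mem_gInterval_trans hG.connected hγ₃ hz₃'.2.1)
  have htγ' := hG.mem_gInterval_meet htz hz₃'.1
  have hlow := dist_le_of_mem_gInterval
    (hG.median_mem_gInterval_of_le htz hγz htγ' hγγ')
  have hjoin := hG.dist_meet_add_dist_median htz hγz
  rw [hG.meet_eq_base_of_not_mem ht fun h =>
    ht₃ (mem_gInterval_trans hG.connected h hγ₃), dist_self] at hjoin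
  have hup := hG.dist_add_dist_le hγ'₃ hz₃'.2.1
  have := dist_le_of_mem_gInterval (hG.mem_gInterval_meet
    (mem_gInterval_trans hG.connected (hG.meet_mem_left u _ z₃) hγ'z)
    (hG.meet_mem_right u _ z₃))
  omega

lemma meet_median_eq {u t z₁ z₃ J : V} (h₁₃ : hG.meet u z₁ z₃ = u) (ht : G.dist u t = 1)
    (ht₁ : t ∈ gInterval G u z₁) (ht₃ : t ∉ gInterval G u z₃) (htJ : t ∈ gInterval G u J)
    (h₃ : z₃ ∈ gInterval G u J) : hG.meet u z₁ (hG.median t z₃ J) = t := by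
  have hz₃' := hG.median_mem_of_le htJ h₃
  have htμ := hG.mem_gInterval_meet ht₁ hz₃'.1
  have hμ₃ := hG.meet_eq_base_of_le h₁₃ (hG.meet_mem_left u z₁ (hG.median t z₃ J))
  have := hG.dist_add_dist_le (hG.meet_mem_right u z₁ _) hz₃'.2.1
  rw [hμ₃, dist_self, hG.dist_median_eq_add_one ht ht₃ htJ h₃] at this
  have := dist_le_of_mem_gInterval htμ
  exact (eq_of_mem_gInterval_of_dist_eq hG.connected htμ (by omega)).symm

/-- One step of the induction proving `dist_eq_dist_meet_add_dist_meet`: the root moves up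
from `u` to an atom `t ≤ z₁`, and `z₃` is replaced by `t ⊔ z₃`. -/
lemma dist_eq_dist_meet_add_dist_meet_of_atom {u z₁ z₃ J z t : V} (h₁₃ : hG.meet u z₁ z₃ = u)
    (h₁ : z₁ ∈ gInterval G u J) (h₃ : z₃ ∈ gInterval G u J) (hJ : J ∈ gInterval G z₁ z₃)
    (hz : z ∈ gInterval G u J) (ht : G.dist u t = 1) (htz : t ∈ gInterval G u z)
    (ht₁ : t ∈ gInterval G u z₁)
    (IH : hG.meet t z₁ (hG.median t z₃ J) = t → z₁ ∈ gInterval G t J →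
      hG.median t z₃ J ∈ gInterval G t J → J ∈ gInterval G z₁ (hG.median t z₃ J) →
      z ∈ gInterval G t J → G.dist t z =
        G.dist t (hG.meet t z z₁) + G.dist t (hG.meet t z (hG.median t z₃ J))) :
    G.dist u z = G.dist u (hG.meet u z z₁) + G.dist u (hG.meet u z z₃) := by
  have hc := hG.connected
  have ht₃ : t ∉ gInterval G u z₃ := fun h => by
    simp [hG.eq_of_meet_eq_base h₁₃ ht₁ h] at ht
  have htJ := mem_gInterval_trans hc htz hz
  have hz₃' := hG.median_mem_of_le htJ h₃
  have hμ := hG.meet_median_eq h₁₃ ht ht₁ ht₃ htJ h₃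
  have hJ' : J ∈ gInterval G z₁ (hG.median t z₃ J) := by
    refine hG.mem_gInterval_of_dist_add_eq h₁ hz₃'.2.2 ?_
    rw [hμ, hG.dist_median_eq_add_one ht ht₃ htJ h₃,
      hG.dist_eq_add_of_meet_eq h₁₃ h₁ h₃ hJ, ht]
    ring
  have key := IH (by rw [hG.meet_eq_meet_of_le ht₁ hz₃'.1, hμ])
    (mem_gInterval_trans_lower hc h₁ ht₁).2 (mem_gInterval_trans_lower hc hz₃'.2.2 hz₃'.1).2 hJ'
    (mem_gInterval_trans_lower hc hz htz).2
  rw [hG.meet_eq_meet_of_le htz ht₁, hG.meet_eq_meet_of_le htz hz₃'.1] at key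
  have := hG.dist_meet_median_eq ht htz ht₃ hz h₃
  have h₁' := hG.mem_gInterval_meet htz ht₁
  have h₃' := hG.mem_gInterval_meet htz hz₃'.1
  rw [mem_gInterval_iff] at htz h₁' h₃'
  omega

/-- Distributivity of the interval `I(u, J)` with `J = z₁ ⊔ z₃` and `z₁ ⊓ z₃ = u`: every
`z ≤ J` splits as `(z ⊓ z₁) ⊔ (z ⊓ z₃)`, read off on heights. -/
theorem dist_eq_dist_meet_add_dist_meet {u z₁ z₃ J z : V} (h₁₃ : hG.meet u z₁ z₃ = u)
    (h₁ : z₁ ∈ gInterval G u J) (h₃ : z₃ ∈ gInterval G u J) (hJ : J ∈ gInterval G z₁ z₃)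
    (hz : z ∈ gInterval G u J) :
    G.dist u z = G.dist u (hG.meet u z z₁) + G.dist u (hG.meet u z z₃) := by
  induction hn : G.dist u z using Nat.strong_induction_on generalizing u z₁ z₃ with
  | _ n IH =>
  rcases eq_or_ne u z with rfl | hne
  · simp [← hn, hG.meet_self_left]
  obtain ⟨t, ht, htz⟩ := exists_dist_eq_one_mem_gInterval hG.connected hne
  have htJ := mem_gInterval_trans hG.connected htz hz
  have hlt : G.dist t z < n := by
    rw [mem_gInterval_iff] at htz
    omega
  rcases hG.mem_gInterval_or_mem_gInterval_of_atom h₁₃ h₁ h₃ hJ ht htJ with ht₁ | ht₃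
  · exact hn ▸ hG.dist_eq_dist_meet_add_dist_meet_of_atom h₁₃ h₁ h₃ hJ hz ht htz ht₁
      fun a b c d e => IH _ hlt a b c d e rfl
  · rw [hG.meet_comm] at h₁₃
    rw [add_comm, ← hn]
    exact hG.dist_eq_dist_meet_add_dist_meet_of_atom h₁₃ h₃ h₁ (mem_gInterval_symm hJ) hz ht
      htz ht₃ fun a b c d e => IH _ hlt a b c d e rfl

/-- Distributivity in general position: for `z ≤ x ⊔ y`, `h(z) ≤ h(z ⊓ x) + h(z ⊓ y)`. Apply
the case `x ⊓ y = u` above with root `a = x ⊓ y`, to `W = z ⊔ a`. -/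
theorem dist_le_dist_meet_add_dist_meet {u x y t z : V} (hx : x ∈ gInterval G u t)
    (hy : y ∈ gInterval G u t) (hz : z ∈ gInterval G u (hG.median x y t)) :
    G.dist u z ≤ G.dist u (hG.meet u z x) + G.dist u (hG.meet u z y) := by
  have hc := hG.connected
  have hJ := hG.median_mem_of_le hx hy
  obtain ⟨a, hax, hay, hxy⟩ : ∃ a, a ∈ gInterval G u x ∧ a ∈ gInterval G u y ∧
      hG.meet u x y = a := ⟨_, hG.meet_mem_left u x y, hG.meet_mem_right u x y, rfl⟩
  have haJ := mem_gInterval_trans hc hax hJ.1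
  obtain ⟨W, hzW, haW, hWJ, hW⟩ : ∃ W, z ∈ gInterval G u W ∧ a ∈ gInterval G u W ∧
      W ∈ gInterval G u (hG.median x y t) ∧ W ∈ gInterval G z a :=
    have h := hG.median_mem_of_le hz haJ
    ⟨_, h.1, h.2.1, h.2.2, (hG.median_mem z a _).1⟩
  have box := hG.dist_eq_dist_meet_add_dist_meet
    (by rw [hG.meet_eq_meet_of_le hax hay, hxy]) (mem_gInterval_trans_lower hc hJ.1 hax).2
    (mem_gInterval_trans_lower hc hJ.2.1 hay).2 (hG.median_mem x y t).1
    (mem_gInterval_trans_lower hc hWJ haW).2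
  rw [hG.meet_eq_meet_of_le haW hax, hG.meet_eq_meet_of_le haW hay] at box
  have hWh := hG.dist_meet_add_dist_of_mem_gInterval hzW haW hW
  have hb₁ := hG.dist_add_dist_le (hG.meet_mem_left u W x) hzW
  have hb₂ := hG.dist_add_dist_le (hG.meet_mem_left u W y) hzW
  have := dist_le_of_mem_gInterval (hG.mem_gInterval_meet (hG.meet_mem_right u (hG.meet u W x) z)
    (mem_gInterval_trans hc (hG.meet_mem_left u _ z) (hG.meet_mem_right u W x)))
  have := dist_le_of_mem_gInterval (hG.mem_gInterval_meet (hG.meet_mem_right u (hG.meet u W y) z)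
    (mem_gInterval_trans hc (hG.meet_mem_left u _ z) (hG.meet_mem_right u W y)))
  have e₁ := hG.mem_gInterval_meet haW hax
  have e₂ := hG.mem_gInterval_meet haW hay
  rw [mem_gInterval_iff] at haW e₁ e₂
  omega

lemma mem_gInterval_of_mem_gInterval_median {u x y t z : V} (hx : x ∈ gInterval G u t)
    (hy : y ∈ gInterval G u t) (hz : z ∈ gInterval G u (hG.median x y t))
    (hzy : hG.meet u z y = u) : z ∈ gInterval G u x := by
  have := hG.dist_le_dist_meet_add_dist_meet hx hy hz
  rw [hzy, dist_self] at this
  have hzx := hG.meet_mem_left u z x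
  rw [← eq_of_mem_gInterval_of_dist_eq hG.connected hzx
    (le_antisymm (dist_le_of_mem_gInterval hzx) (by omega))]
  exact hG.meet_mem_right u z x

theorem false_of_median_mem_gInterval {u r x₁ x₂ x₃ : V} (h₁ : x₁ ∈ gInterval G u r)
    (h₂ : x₂ ∈ gInterval G u r) (h₃ : x₃ ∈ gInterval G u r) (h₁₃ : hG.meet u x₁ x₃ = u)
    (h₁₂ : x₁ ∉ gInterval G u x₂) (h₃₂ : x₃ ∉ gInterval G u x₂)
    (hchain : hG.median x₁ x₂ r ∈ gInterval G x₂ (hG.median x₂ x₃ r) ∨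
      hG.median x₂ x₃ r ∈ gInterval G x₂ (hG.median x₁ x₂ r)) : False := by
  have hκ₁ := hG.median_mem_of_le h₁ h₂
  have hκ₂ := hG.median_mem_of_le h₂ h₃
  rcases hchain with h | h
  · have := (mem_gInterval_trans_upper hG.connected hκ₂.1 h).1
    exact h₁₂ <| hG.mem_gInterval_of_mem_gInterval_median h₂ h₃
      (mem_gInterval_trans hG.connected hκ₁.1 this) h₁₃
  · have := (mem_gInterval_trans_upper hG.connected hκ₁.2.1 h).1
    rw [hG.median_comm] at this
    exact h₃₂ <| hG.mem_gInterval_of_mem_gInterval_median h₂ h₁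
      (mem_gInterval_trans hG.connected hκ₂.2.1 this) (by rwa [hG.meet_comm])

lemma exists_maximal_lower_bound (u y₁ y₂ y₃ : V) :
    ∃ g, g ∈ gInterval G u y₁ ∧ g ∈ gInterval G u y₂ ∧ g ∈ gInterval G u y₃ ∧
      ∀ z, z ∈ gInterval G g y₁ → z ∈ gInterval G g y₂ → z ∈ gInterval G g y₃ → z = g := by
  have hc := hG.connected
  have hg := hG.meet_mem_left u (hG.meet u y₁ y₂) y₃
  have hg₁ := mem_gInterval_trans hc hg (hG.meet_mem_left u y₁ y₂)
  have hg₂ := mem_gInterval_trans hc hg (hG.meet_mem_right u y₁ y₂)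
  have hg₃ := hG.meet_mem_right u (hG.meet u y₁ y₂) y₃
  refine ⟨_, hg₁, hg₂, hg₃, fun z h₁ h₂ h₃ => ?_⟩
  have h₁' := mem_gInterval_trans_upper hc hg₁ h₁
  exact gInterval_antisymm hc (hG.mem_gInterval_meet (hG.mem_gInterval_meet h₁'.1
    (mem_gInterval_trans_upper hc hg₂ h₂).1) (mem_gInterval_trans_upper hc hg₃ h₃).1) h₁'.2

lemma eq_of_adj_of_adj_of_adj {a b c x y : V} (hab : G.dist a b = 2) (hbc : G.dist b c = 2)
    (hca : G.dist c a = 2) (hxa : G.Adj x a) (hxb : G.Adj x b) (hxc : G.Adj x c)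
    (hya : G.Adj y a) (hyb : G.Adj y b) (hyc : G.Adj y c) : x = y :=
  hG.median_unique (mem_gInterval_of_adj_of_adj hab hxa.symm hxb)
    (mem_gInterval_of_adj_of_adj hbc hxb.symm hxc) (mem_gInterval_of_adj_of_adj hca hxc.symm hxa)
    (mem_gInterval_of_adj_of_adj hab hya.symm hyb)
    (mem_gInterval_of_adj_of_adj hbc hyb.symm hyc) (mem_gInterval_of_adj_of_adj hca hyc.symm hya)

lemma adj_median {a b c : V} (hab : G.dist a b = 2) (hbc : G.dist b c = 2)
    (hca : G.dist c a = 2) :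
    G.Adj a (hG.median a b c) ∧ G.Adj b (hG.median a b c) ∧ G.Adj c (hG.median a b c) := by
  obtain ⟨h₁, h₂, h₃⟩ := hG.median_mem a b c
  rw [mem_gInterval_iff] at h₁ h₂ h₃
  have : G.dist (hG.median a b c) a = G.dist a (hG.median a b c) := dist_comm
  have : G.dist (hG.median a b c) b = G.dist b (hG.median a b c) := dist_comm
  have : G.dist (hG.median a b c) c = G.dist c (hG.median a b c) := dist_comm
  simp only [← dist_eq_one_iff_adj]
  omega

/-- The top vertex is the median of `wpq, wps, wqs`; the non-adjacencies come from uniqueness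
of medians, the distances from parity. -/
theorem hasInducedCube_of_squares {v p q s wpq wps wqs : V}
    (hvp : G.Adj v p) (hvq : G.Adj v q) (hvs : G.Adj v s)
    (hpq : p ≠ q) (hps : p ≠ s) (hqs : q ≠ s)
    (hp₁ : G.Adj p wpq) (hq₁ : G.Adj q wpq) (hp₂ : G.Adj p wps) (hs₂ : G.Adj s wps)
    (hq₃ : G.Adj q wqs) (hs₃ : G.Adj s wqs)
    (hv₁ : wpq ≠ v) (hv₂ : wps ≠ v) (hv₃ : wqs ≠ v) : HasInducedCube G 3 := by
  have two := @dist_eq_two_of_dist_eq_one _ _ hG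
  have one := fun {a b : V} (h : G.Adj a b) => dist_eq_one_iff_adj.2 h
  have dpq := two hpq (one hvp.symm) (one hvq)
  have dps := two hps (one hvp.symm) (one hvs)
  have dqs := two hqs (one hvq.symm) (one hvs)
  have dv₁ := two hv₁.symm (one hvp) (one hp₁)
  have dv₂ := two hv₂.symm (one hvp) (one hp₂)
  have dv₃ := two hv₃.symm (one hvq) (one hq₃)
  have h₁₂ : wpq ≠ wps := fun h => hv₁ <| hG.eq_of_adj_of_adj_of_adj dpq dqs
    (dist_comm.trans dps) hp₁.symm hq₁.symm (h ▸ hs₂.symm) hvp hvq hvs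
  have h₁₃ : wpq ≠ wqs := fun h => hv₁ <| hG.eq_of_adj_of_adj_of_adj dpq dqs
    (dist_comm.trans dps) hp₁.symm hq₁.symm (h ▸ hs₃.symm) hvp hvq hvs
  have h₂₃ : wps ≠ wqs := fun h => hv₂ <| hG.eq_of_adj_of_adj_of_adj dpq dqs
    (dist_comm.trans dps) hp₂.symm (h ▸ hq₃.symm) hs₂.symm hvp hvq hvs
  have d₁₂ := two h₁₂ (one hp₁.symm) (one hp₂)
  have d₁₃ := two h₁₃ (one hq₁.symm) (one hq₃)
  have d₂₃ := two h₂₃ (one hs₂.symm) (one hs₃)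
  have np : ¬G.Adj p wqs := fun h => hpq <| hG.eq_of_adj_of_adj_of_adj dv₁ d₁₃
    (dist_comm.trans dv₃) hvp.symm hp₁ h hvq.symm hq₁ hq₃
  have nq : ¬G.Adj q wps := fun h => hpq <| hG.eq_of_adj_of_adj_of_adj dv₁ d₁₂
    (dist_comm.trans dv₂) hvp.symm hp₁ hp₂ hvq.symm hq₁ h
  have ns : ¬G.Adj s wpq := fun h => hps <| hG.eq_of_adj_of_adj_of_adj dv₁ d₁₂
    (dist_comm.trans dv₂) hvp.symm hp₁ hp₂ hvs.symm h hs₂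
  obtain ⟨hz₁, hz₂, hz₃⟩ := hG.adj_median d₁₂ d₂₃ (dist_comm.trans d₁₃)
  have nv : ¬G.Adj v (hG.median wpq wps wqs) := fun h => np <| by
    rw [hG.eq_of_adj_of_adj_of_adj dv₁ d₁₂ (dist_comm.trans dv₂) hvp.symm hp₁ hp₂ h.symm
      hz₁.symm hz₂.symm]
    exact hz₃.symm
  have three := @dist_eq_three_of_dist_eq_two _ _ hG
  exact hasInducedCube_three hG.connected hvp hvq hvs hp₁ hq₁ hp₂ hs₂ hq₃ hs₃ hz₁ hz₂ hz₃
    (three (mt dist_eq_one_iff_adj.1 nv) dv₁ (one hz₁))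
    (three (mt dist_eq_one_iff_adj.1 np) dpq (one hq₃))
    (three (mt dist_eq_one_iff_adj.1 nq) (dist_comm.trans dpq) (one hp₂))
    (three (mt dist_eq_one_iff_adj.1 ns) (dist_comm.trans dps) (one hp₁))

lemma exists_atom_of_meet_ne {u x y : V} (h : hG.meet u x y ≠ u) :
    ∃ a, G.dist u a = 1 ∧ a ∈ gInterval G u x ∧ a ∈ gInterval G u y := by
  obtain ⟨a, ha, hau⟩ := exists_dist_eq_one_mem_gInterval hG.connected (Ne.symm h)
  exact ⟨a, ha, mem_gInterval_trans hG.connected hau (hG.meet_mem_left u x y),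
    mem_gInterval_trans hG.connected hau (hG.meet_mem_right u x y)⟩

lemma exists_square {u a b y : V} (ha : G.dist u a = 1) (hb : G.dist u b = 1) (hab : a ≠ b)
    (hay : a ∈ gInterval G u y) (hby : b ∈ gInterval G u y) :
    ∃ w, G.Adj a w ∧ G.Adj b w ∧ w ≠ u := by
  have hJ := hG.median_mem_of_le hay hby
  have hdJ := two_mul_dist_eq_of_mem_gInterval hJ.1 hJ.2.1 (hG.median_mem a b y).1
  rw [ha, hb, hG.dist_eq_two_of_dist_eq_one hab (dist_comm.trans ha) hb] at hdJ
  have h₁ := hJ.1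
  have h₂ := hJ.2.1
  rw [mem_gInterval_iff] at h₁ h₂
  refine ⟨hG.median a b y, dist_eq_one_iff_adj.1 (by omega), dist_eq_one_iff_adj.1 (by omega),
    fun h => ?_⟩
  rw [h, dist_self] at hdJ
  omega

theorem hasInducedCube_of_meet_ne {u y₁ y₂ y₃ : V} (h₁₂ : hG.meet u y₁ y₂ ≠ u)
    (h₁₃ : hG.meet u y₁ y₃ ≠ u) (h₂₃ : hG.meet u y₂ y₃ ≠ u)
    (h : ∀ z, z ∈ gInterval G u y₁ → z ∈ gInterval G u y₂ → z ∈ gInterval G u y₃ → z = u) :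
    HasInducedCube G 3 := by
  obtain ⟨p, hp, hp₁, hp₂⟩ := hG.exists_atom_of_meet_ne h₁₂
  obtain ⟨q, hq, hq₁, hq₃⟩ := hG.exists_atom_of_meet_ne h₁₃
  obtain ⟨s, hs, hs₂, hs₃⟩ := hG.exists_atom_of_meet_ne h₂₃
  have hpq : p ≠ q := by rintro rfl; simp [h p hp₁ hp₂ hq₃] at hp
  have hps : p ≠ s := by rintro rfl; simp [h p hp₁ hp₂ hs₃] at hp
  have hqs : q ≠ s := by rintro rfl; simp [h q hq₁ hs₂ hq₃] at hq
  obtain ⟨wpq, hpw, hqw, hwpq⟩ := hG.exists_square hp hq hpq hp₁ hq₁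
  obtain ⟨wps, hpw', hsw, hwps⟩ := hG.exists_square hp hs hps hp₂ hs₂
  obtain ⟨wqs, hqw', hsw', hwqs⟩ := hG.exists_square hq hs hqs hq₃ hs₃
  exact hG.hasInducedCube_of_squares (dist_eq_one_iff_adj.1 hp) (dist_eq_one_iff_adj.1 hq)
    (dist_eq_one_iff_adj.1 hs) hpq hps hqs hpw hqw hpw' hsw hqw' hsw' hwpq hwps hwqs

end MedianGraph

section Tree

/-- `I(x, r)` is the unique path from `x` to `r`. -/
lemma SimpleGraph.IsTree.mem_gInterval_or_mem_gInterval {W : Type*} {H : SimpleGraph W}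
    (hH : H.IsTree) {x r w w' : W} (hw : w ∈ gInterval H x r) (hw' : w' ∈ gInterval H x r) :
    w' ∈ gInterval H w r ∨ w ∈ gInterval H w' r := by
  obtain ⟨p, hp⟩ := hH.connected.exists_walk_length_eq_dist x w
  obtain ⟨q, hq⟩ := hH.connected.exists_walk_length_eq_dist w r
  obtain ⟨p', hp'⟩ := hH.connected.exists_walk_length_eq_dist x w'
  obtain ⟨q', hq'⟩ := hH.connected.exists_walk_length_eq_dist w' r
  have hpq : p.append q = p'.append q' := (hH.existsUnique_path x r).unique
    ((p.append q).isPath_of_length_eq_dist (by rw [Walk.length_append, hp, hq]; exact hw))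
    ((p'.append q').isPath_of_length_eq_dist (by rw [Walk.length_append, hp', hq']; exact hw'))
  have : w' ∈ (p.append q).support :=
    hpq ▸ (Walk.mem_support_append_iff _ _).2 (Or.inr q'.start_mem_support)
  rcases (Walk.mem_support_append_iff _ _).1 this with h | h
  · exact Or.inr (mem_gInterval_trans_lower hH.connected hw
      (mem_gInterval_of_mem_support hH.connected p hp h)).2
  · exact Or.inl (mem_gInterval_of_mem_support hH.connected q hq h)

variable {T : G.Subgraph}

/-- The branch of `x` towards the root `r`: the path of the tree `T` from `x` to `r`. -/
def branch (T : G.Subgraph) (x r : T.verts) : Set V :=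
  {w | ∃ hw : w ∈ T.verts, (⟨w, hw⟩ : T.verts) ∈ gInterval T.coe x r}

lemma mem_branch_self (x r : T.verts) : (x : V) ∈ branch T x r :=
  ⟨x.2, left_mem_gInterval x r⟩

lemma mem_branch_root (x r : T.verts) : (r : V) ∈ branch T x r :=
  ⟨r.2, right_mem_gInterval x r⟩

lemma branch_subset_branch (hT : T.coe.Connected) {x w r : T.verts}
    (hw : w ∈ gInterval T.coe x r) : branch T w r ⊆ branch T x r :=
  fun _ ⟨hy, h⟩ => ⟨hy, (mem_gInterval_trans_upper hT hw h).1⟩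

variable {r : T.verts} (hbr : ∀ x, Gated G (branch T x r))
include hbr

lemma isGate_branch_of_mem_imprints {u y : V} (hy : y ∈ imprints G u T.verts) :
    IsGate G (branch T ⟨y, hy.1⟩ r) u y := by
  obtain ⟨g, hg⟩ := hbr ⟨y, hy.1⟩ u
  have : g ∈ gInterval G u y ∩ T.verts :=
    ⟨hg.mem_gInterval (mem_branch_self ⟨y, hy.1⟩ r), hg.1.1⟩
  rw [hy.2, Set.mem_singleton_iff] at this
  subst this
  exact hg

variable (hT : T.coe.IsTree)
include hT

lemma isGate_branch (hc : G.Connected) {x w : T.verts} (hw : w ∈ gInterval T.coe x r) :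
    IsGate G (branch T w r) x w := by
  induction hn : T.coe.dist x w using Nat.strong_induction_on generalizing x with
  | _ n IH =>
  rcases eq_or_ne x w with rfl | hne
  · exact isGate_self (mem_branch_self x r)
  obtain ⟨x', hxx', hx'w⟩ := exists_dist_eq_one_mem_gInterval hT.connected hne
  obtain ⟨hx'r, hwr⟩ := mem_gInterval_trans_lower hT.connected hw hx'w
  have hx : (x : V) ∉ branch T x' r := fun ⟨_, h⟩ => by
    change x ∈ gInterval T.coe x' r at h
    rw [mem_gInterval_iff] at h hx'r
    rw [dist_comm, hxx'] at h
    omega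
  have hgate := (hbr x').isGate_of_adj hc (T.coe_adj_sub _ _ (dist_eq_one_iff_adj.1 hxx'))
    (mem_branch_self x' r) hx
  refine hgate.trans (branch_subset_branch hT.connected hwr) (IH _ ?_ hwr rfl)
  rw [mem_gInterval_iff] at hx'w
  omega

lemma mem_gInterval_or_mem_gInterval_of_mem_branch (hc : G.Connected) {x : T.verts} {w w' : V}
    (hw : w ∈ branch T x r) (hw' : w' ∈ branch T x r) :
    w ∈ gInterval G x w' ∨ w' ∈ gInterval G x w := by
  obtain ⟨hwT, hwI⟩ := hw
  obtain ⟨hw'T, hw'I⟩ := hw'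
  rcases hT.mem_gInterval_or_mem_gInterval hwI hw'I with h | h
  · exact Or.inl ((isGate_branch hbr hT hc hwI).mem_gInterval ⟨hw'T, h⟩)
  · exact Or.inr ((isGate_branch hbr hT hc hw'I).mem_gInterval ⟨hwT, h⟩)

/-- The branch of `x₂` is gated, hence convex, and a chain; it contains the joins `x₁ ⊔ x₂`
and `x₂ ⊔ x₃` below `r`, which `MedianGraph.false_of_median_mem_gInterval` forbids. -/
theorem false_of_mem_imprints_of_meet_eq (hG : MedianGraph G) {u x₁ x₂ x₃ : V}
    (h₁ : x₁ ∈ imprints G u T.verts) (h₂ : x₂ ∈ imprints G u T.verts)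
    (h₃ : x₃ ∈ imprints G u T.verts) (h₁₂ : x₁ ≠ x₂) (h₃₂ : x₃ ≠ x₂)
    (h₁₃ : hG.meet u x₁ x₃ = u) : False := by
  have hle : ∀ {x}, (hx : x ∈ imprints G u T.verts) → x ∈ gInterval G u r := fun hx =>
    (isGate_branch_of_mem_imprints hbr hx).mem_gInterval (mem_branch_root _ r)
  have hnot : ∀ x ∈ T.verts, x ≠ x₂ → x ∉ gInterval G u x₂ := fun x hxT hx hxI => by
    have : x ∈ gInterval G u x₂ ∩ T.verts := ⟨hxI, hxT⟩
    exact hx (by rwa [h₂.2] at this)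
  have hconv := (hbr ⟨x₂, h₂.1⟩).gConvex hG.connected
  refine hG.false_of_median_mem_gInterval (hle h₁) (hle h₂) (hle h₃) h₁₃ (hnot _ h₁.1 h₁₂)
    (hnot _ h₃.1 h₃₂)
    (mem_gInterval_or_mem_gInterval_of_mem_branch hbr hT hG.connected (x := ⟨x₂, h₂.1⟩) ?_ ?_)
  · exact hconv _ (mem_branch_self _ r) _ (mem_branch_root _ r) (hG.median_mem x₁ x₂ r).2.1
  · exact hconv _ (mem_branch_self _ r) _ (mem_branch_root _ r)
      (mem_gInterval_symm (hG.median_mem x₂ x₃ r).2.2)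

theorem false_of_three_imprints (hG : MedianGraph G) (hcf : CubeFree G) {v y₁ y₂ y₃ : V}
    (h₁ : y₁ ∈ imprints G v T.verts) (h₂ : y₂ ∈ imprints G v T.verts)
    (h₃ : y₃ ∈ imprints G v T.verts) (h₁₂ : y₁ ≠ y₂) (h₁₃ : y₁ ≠ y₃) (h₂₃ : y₂ ≠ y₃)
    (h : ∀ z, z ∈ gInterval G v y₁ → z ∈ gInterval G v y₂ → z ∈ gInterval G v y₃ → z = v) :
    False := by
  by_cases m₁₃ : hG.meet v y₁ y₃ = v
  · exact false_of_mem_imprints_of_meet_eq hbr hT hG h₁ h₂ h₃ h₁₂ h₂₃.symm m₁₃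
  by_cases m₁₂ : hG.meet v y₁ y₂ = v
  · exact false_of_mem_imprints_of_meet_eq hbr hT hG h₁ h₃ h₂ h₁₃ h₂₃ m₁₂
  by_cases m₂₃ : hG.meet v y₂ y₃ = v
  · exact false_of_mem_imprints_of_meet_eq hbr hT hG h₂ h₁ h₃ h₁₂.symm h₁₃.symm m₂₃
  exact hcf (hG.hasInducedCube_of_meet_ne m₁₂ m₁₃ m₂₃ h)

end Tree

end

theorem tree_gated_branches_quasigated_general {V : Type*} (G : SimpleGraph V)
    (hG : MedianGraph G) (hcf : CubeFree G)
    (T : G.Subgraph) (hT : T.coe.IsTree) (r : V) (hr : r ∈ T.verts)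
    (hbranches : ∀ (x : V) (hx : x ∈ T.verts),
      Gated G {w : V | ∃ hw : w ∈ T.verts,
        T.coe.dist ⟨x, hx⟩ ⟨w, hw⟩ + T.coe.dist ⟨w, hw⟩ ⟨r, hr⟩ =
          T.coe.dist ⟨x, hx⟩ ⟨r, hr⟩})
    (u : V) :
    ∃ a b : V, imprints G u T.verts ⊆ {a, b} := by
  by_contra! h
  obtain ⟨y₁, hy₁, -⟩ := Set.not_subset.1 (h u u)
  obtain ⟨y₂, hy₂, hy₂₁⟩ := Set.not_subset.1 (h y₁ y₁)
  obtain ⟨y₃, hy₃, hy₃₁₂⟩ := Set.not_subset.1 (h y₁ y₂)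
  simp only [Set.mem_insert_iff, Set.mem_singleton_iff, or_self, not_or] at hy₂₁ hy₃₁₂
  obtain ⟨g, hg₁, hg₂, hg₃, hg⟩ := hG.exists_maximal_lower_bound u y₁ y₂ y₃
  have hc := hG.connected
  exact false_of_three_imprints (r := ⟨r, hr⟩) (fun x => hbranches x x.2) hT hG hcf
    (mem_imprints_of_mem_gInterval hc hy₁ hg₁) (mem_imprints_of_mem_gInterval hc hy₂ hg₂)
    (mem_imprints_of_mem_gInterval hc hy₃ hg₃) (Ne.symm hy₂₁) (Ne.symm hy₃₁₂.1)
    (Ne.symm hy₃₁₂.2) hg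

/-- In a cube-free median graph, any rooted tree with gated branches is quasigated:
each outside vertex has at most two imprints on it. -/
theorem tree_gated_branches_quasigated {V : Type*} (G : SimpleGraph V)
    (hG : MedianGraph G) (hcf : CubeFree G)
    (T : G.Subgraph) (hT : T.coe.IsTree) (r : V) (hr : r ∈ T.verts)
    (hbranches : ∀ (x : V) (hx : x ∈ T.verts),
      Gated G {w : V | ∃ hw : w ∈ T.verts,
        T.coe.dist ⟨x, hx⟩ ⟨w, hw⟩ + T.coe.dist ⟨w, hw⟩ ⟨r, hr⟩ =
          T.coe.dist ⟨x, hx⟩ ⟨r, hr⟩})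
    (u : V) (hu : u ∉ T.verts) :
    ∃ a b : V, imprints G u T.verts ⊆ {a, b} :=
  tree_gated_branches_quasigated_general G hG hcf T hT r hr hbranches u
end

section
/- Let G be a cube-free median graph, z a vertex of G, and let the fibers of the star St(z) be classified: F(x) is a panel if d_G(x,z) = 1 and a cone if d_G(x,z) = 2. Suppose u belongs to a panel F(x), v belongs to a cone F(y), and F(x) and F(y) are neighboring fibers (equivalently, x and y are adjacent). Let u₁ and u₂ be the imprints of u on the total boundary ∂*F(x) (possibly u₁ = u₂) and let v⁺ be the gate of v in F(x). Then d_G(u,v) = min{ d_G(u,u₁) + d_G(u₁,v⁺), d_G(u,u₂) + d_G(u₂,v⁺) } + d_G(v⁺,v). -/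
open SimpleGraph Set

/-!
Since `u ∈ F(x)` and `v⁺` is the gate of `v` in `F(x)`, `d(u,v) = d(u,v⁺) + d(v⁺,v)`, so it
suffices that one of the imprints `u₁, u₂` lies on a geodesic from `u` to `v⁺`. This holds as soon
as `v⁺ ∈ ∂*F(x)`, and indeed the neighbour of `v⁺` on a geodesic towards `v ∉ F(x)` leaves `F(x)`;
its gate in the star is then forced to be adjacent to `x`.

The only real work is that `St(z)` is gated. In a cube-free median graph `St(z)` is the union of
the edges and squares at `z`. At most two neighbours of `z` lie on geodesics from `z` to any vertex
(three would span a cube with the median of their pairwise squares), and this makes the union of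
squares convex; convex sets of a median graph are gated, the gate of `w` being a nearest point.
-/

namespace SimpleGraph.Connected

variable {V : Type*} {G : SimpleGraph V}

theorem exists_adj_dist_eq_of_dist_eq_succ (hc : G.Connected) {x y : V} {n : ℕ}
    (h : G.dist x y = n + 1) : ∃ x', G.Adj x x' ∧ G.dist x' y = n := by
  obtain ⟨p, hp⟩ := hc.exists_walk_length_eq_dist x y
  cases p with
  | nil => simp at h
  | @cons _ w _ ha q =>
    refine ⟨_, ha, le_antisymm ?_ ?_⟩
    · have := dist_le q
      simp only [Walk.length_cons] at hp
      omega
    · have := hc.dist_triangle (u := x) (v := w) (w := y)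
      rw [dist_eq_one_iff_adj.mpr ha] at this
      omega

theorem gConvex_of_forall_adj {S : Set V} (hc : G.Connected)
    (hS : ∀ a ∈ S, ∀ b ∈ S, ∀ c, G.Adj a c → G.dist c b + 1 = G.dist a b → c ∈ S) :
    GConvex G S := by
  intro a ha b hb w hw
  obtain ⟨n, hn⟩ : ∃ n, G.dist a w = n := ⟨_, rfl⟩
  induction n generalizing a with
  | zero => rwa [← hc.dist_eq_zero_iff.mp hn]
  | succ n ih =>
    obtain ⟨c, hac, hcw⟩ := hc.exists_adj_dist_eq_of_dist_eq_succ hn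
    have hw' : G.dist a w + G.dist w b = G.dist a b := hw
    have h₁ := hc.dist_triangle (u := c) (v := w) (w := b)
    have h₂ := hc.dist_triangle (u := a) (v := c) (w := b)
    rw [dist_eq_one_iff_adj.mpr hac] at h₂
    have hcb : G.dist c b + 1 = G.dist a b := by omega
    exact ih c (hS a ha b hb c hac hcb) (by show _ = _; omega) hcw

theorem mem_gInterval_of_add_le (hc : G.Connected) {u v w : V}
    (h : G.dist u w + G.dist w v ≤ G.dist u v) :
    w ∈ gInterval G u v :=
  le_antisymm h hc.dist_triangle

end SimpleGraph.Connected

open Finset in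
theorem hasInducedCube_three_of_adj_iff {V : Type*} {G : SimpleGraph V}
    (f : Finset (Fin 3) → V) (hf : ∀ A B, G.Adj (f A) (f B) ↔ #(symmDiff A B) = 1) :
    HasInducedCube G 3 := by
  refine ⟨f, fun A B hAB => ?_, fun _ => Set.mem_univ _, hf⟩
  -- `Q₃` has no twins: a vertex is determined by its neighbourhood
  have twins : ∀ A B : Finset (Fin 3),
      (∀ C, #(symmDiff A C) = 1 ↔ #(symmDiff B C) = 1) → A = B := by decide
  exact twins A B fun C => by rw [← hf, ← hf, hAB]

namespace MedianGraph

variable {V : Type*} {G : SimpleGraph V}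

theorem dist_eq_add_one_or_of_adj (hm : MedianGraph G) {p q : V} (h : G.Adj p q) (t : V) :
    G.dist t q = G.dist t p + 1 ∨ G.dist t p = G.dist t q + 1 := by
  obtain ⟨m, ⟨hpq, hqt, htp⟩, -⟩ := hm.2 p q t
  have hpq : G.dist p m + G.dist m q = 1 := (dist_eq_one_iff_adj.mpr h) ▸ hpq
  have hqt : G.dist q m + G.dist m t = G.dist q t := hqt
  have htp : G.dist t m + G.dist m p = G.dist t p := htp
  have e₁ : G.dist t q = G.dist q t := dist_comm
  have e₂ : G.dist m t = G.dist t m := dist_comm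
  have e₃ : G.dist m p = G.dist p m := dist_comm
  rcases (by omega : G.dist p m = 0 ∨ G.dist m q = 0) with h₀ | h₀
  · obtain rfl := hm.1.dist_eq_zero_iff.mp h₀
    have : G.dist q p = 1 := dist_eq_one_iff_adj.mpr h.symm
    omega
  · obtain rfl := hm.1.dist_eq_zero_iff.mp h₀
    omega

theorem not_adj_of_dist (hm : MedianGraph G) {t x y : V}
    (hxy : G.dist t x + 1 ≠ G.dist t y) (hyx : G.dist t y + 1 ≠ G.dist t x) : ¬ G.Adj x y :=
  fun h => (hm.dist_eq_add_one_or_of_adj h t).elim (fun e => hxy e.symm) (fun e => hyx e.symm)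

theorem dist_add_dist_add_dist_mod_two (hm : MedianGraph G) (t x y : V) :
    (G.dist t x + G.dist t y + G.dist x y) % 2 = 0 := by
  obtain ⟨n, hn⟩ : ∃ n, G.dist x y = n := ⟨_, rfl⟩
  induction n generalizing x with
  | zero =>
    obtain rfl := hm.1.dist_eq_zero_iff.mp hn
    omega
  | succ n ih =>
    obtain ⟨x', hxx', hx'y⟩ := hm.1.exists_adj_dist_eq_of_dist_eq_succ hn
    have := ih x' hx'y
    rcases hm.dist_eq_add_one_or_of_adj hxx' t with h | h <;> omega

theorem dist_eq_two_of_adj_of_adj (hm : MedianGraph G) {z a b : V} (ha : G.Adj z a)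
    (hb : G.Adj z b) (hab : a ≠ b) : G.dist a b = 2 := by
  have h₁ := hm.1.dist_triangle (u := a) (v := z) (w := b)
  have e₁ : G.dist a z = 1 := dist_eq_one_iff_adj.mpr ha.symm
  have e₂ : G.dist z b = 1 := dist_eq_one_iff_adj.mpr hb
  have e₃ : G.dist z a = 1 := dist_eq_one_iff_adj.mpr ha
  have h₀ : G.dist a b ≠ 0 := fun h => hab (hm.1.dist_eq_zero_iff.mp h)
  have h₂ : G.dist a b ≠ 1 := fun h =>
    hm.not_adj_of_dist (t := z) (by omega) (by omega) (dist_eq_one_iff_adj.mp h)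
  omega

theorem mem_gInterval_of_adj_of_adj (hm : MedianGraph G) {s p q : V} (hp : G.Adj s p)
    (hq : G.Adj s q) (hpq : p ≠ q) : s ∈ gInterval G p q := by
  have e₁ : G.dist p s = 1 := dist_eq_one_iff_adj.mpr hp.symm
  have e₂ : G.dist s q = 1 := dist_eq_one_iff_adj.mpr hq
  have e₃ := hm.dist_eq_two_of_adj_of_adj hp hq hpq
  show _ = _
  omega

/-- Median graphs contain no `K₂,₃`. -/
theorem eq_of_adj_of_adj_of_adj_s18 (hm : MedianGraph G) {s t p q r : V}
    (hsp : G.Adj s p) (hsq : G.Adj s q) (hsr : G.Adj s r)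
    (htp : G.Adj t p) (htq : G.Adj t q) (htr : G.Adj t r)
    (hpq : p ≠ q) (hpr : p ≠ r) (hqr : q ≠ r) : s = t := by
  obtain ⟨m, -, hm_unique⟩ := hm.2 p q r
  have hs := hm_unique s ⟨hm.mem_gInterval_of_adj_of_adj hsp hsq hpq,
    hm.mem_gInterval_of_adj_of_adj hsq hsr hqr, hm.mem_gInterval_of_adj_of_adj hsr hsp hpr.symm⟩
  have ht := hm_unique t ⟨hm.mem_gInterval_of_adj_of_adj htp htq hpq,
    hm.mem_gInterval_of_adj_of_adj htq htr hqr, hm.mem_gInterval_of_adj_of_adj htr htp hpr.symm⟩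
  exact hs.trans ht.symm

theorem eq_or_eq_of_adj_of_adj (hm : MedianGraph G) {z s p q e : V}
    (hzp : G.Adj z p) (hps : G.Adj p s) (hzq : G.Adj z q) (hqs : G.Adj q s) (hpq : p ≠ q)
    (hzs : z ≠ s) (hze : G.Adj z e) (hes : G.Adj e s) : e = p ∨ e = q := by
  by_contra! h
  exact hzs (hm.eq_of_adj_of_adj_of_adj_s18 hzp hzq hze hps.symm hqs.symm hes.symm hpq
    h.1.symm h.2.symm)

theorem exists_adj_adj_adj_of_dist_eq_two (hm : MedianGraph G) {p q r : V}
    (hpq : G.dist p q = 2) (hqr : G.dist q r = 2) (hpr : G.dist p r = 2) :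
    ∃ m, G.Adj p m ∧ G.Adj q m ∧ G.Adj r m := by
  obtain ⟨m, ⟨h₁, h₂, h₃⟩, -⟩ := hm.2 p q r
  have h₁ : G.dist p m + G.dist m q = G.dist p q := h₁
  have h₂ : G.dist q m + G.dist m r = G.dist q r := h₂
  have h₃ : G.dist r m + G.dist m p = G.dist r p := h₃
  have e₁ : G.dist m q = G.dist q m := dist_comm
  have e₂ : G.dist m r = G.dist r m := dist_comm
  have e₃ : G.dist r p = G.dist p r := dist_comm
  have e₄ : G.dist m p = G.dist p m := dist_comm
  refine ⟨m, ?_, ?_, ?_⟩ <;> exact dist_eq_one_iff_adj.mp (by omega)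

theorem exists_adj_adj_dist_lt (hm : MedianGraph G) {x y u : V} (hxy : G.dist x y = 2)
    (h : G.dist u x = G.dist u y) :
    ∃ m, G.Adj x m ∧ G.Adj y m ∧ G.dist u m + 1 = G.dist u x := by
  obtain ⟨m, ⟨h₁, h₂, h₃⟩, -⟩ := hm.2 x y u
  have h₁ : G.dist x m + G.dist m y = G.dist x y := h₁
  have h₂ : G.dist y m + G.dist m u = G.dist y u := h₂
  have h₃ : G.dist u m + G.dist m x = G.dist u x := h₃
  have e₁ : G.dist m x = G.dist x m := dist_comm
  have e₂ : G.dist m y = G.dist y m := dist_comm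
  have e₃ : G.dist m u = G.dist u m := dist_comm
  have e₄ : G.dist y u = G.dist u y := dist_comm
  have hx : G.dist x m ≠ 0 := by
    intro h₀
    obtain rfl := hm.1.dist_eq_zero_iff.mp h₀
    have : G.dist y x = G.dist x y := dist_comm
    omega
  have hy : G.dist m y ≠ 0 := by
    intro h₀
    obtain rfl := hm.1.dist_eq_zero_iff.mp h₀
    omega
  exact ⟨m, dist_eq_one_iff_adj.mp (by omega), dist_eq_one_iff_adj.mp (by omega), by omega⟩

theorem hasInducedCube_of_cube_edges (hm : MedianGraph G) {z c₀ c₁ c₂ b₀₁ b₀₂ b₁₂ m : V}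
    (h₀ : G.Adj z c₀) (h₁ : G.Adj z c₁) (h₂ : G.Adj z c₂)
    (h₀₀₁ : G.Adj c₀ b₀₁) (h₁₀₁ : G.Adj c₁ b₀₁) (h₀₀₂ : G.Adj c₀ b₀₂) (h₂₀₂ : G.Adj c₂ b₀₂)
    (h₁₁₂ : G.Adj c₁ b₁₂) (h₂₁₂ : G.Adj c₂ b₁₂)
    (hm₀₁ : G.Adj b₀₁ m) (hm₀₂ : G.Adj b₀₂ m) (hm₁₂ : G.Adj b₁₂ m)
    (hc₀₁ : c₀ ≠ c₁) (hc₀₂ : c₀ ≠ c₂) (hc₁₂ : c₁ ≠ c₂)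
    (d₀₁ : G.dist z b₀₁ = 2) (d₀₂ : G.dist z b₀₂ = 2) (d₁₂ : G.dist z b₁₂ = 2)
    (dm : G.dist z m = 3) : HasInducedCube G 3 := by
  have e₀ : G.dist z c₀ = 1 := dist_eq_one_iff_adj.mpr h₀
  have e₁ : G.dist z c₁ = 1 := dist_eq_one_iff_adj.mpr h₁
  have e₂ : G.dist z c₂ = 1 := dist_eq_one_iff_adj.mpr h₂
  have ez : G.dist z z = 0 := dist_self
  have n₀ : ¬ G.Adj c₀ b₁₂ := fun h => by
    obtain rfl := hm.eq_of_adj_of_adj_of_adj_s18 h₀ h₁ h₂ h.symm h₁₁₂.symm h₂₁₂.symm hc₀₁ hc₀₂ hc₁₂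
    omega
  have n₁ : ¬ G.Adj c₁ b₀₂ := fun h => by
    obtain rfl := hm.eq_of_adj_of_adj_of_adj_s18 h₀ h₁ h₂ h₀₀₂.symm h.symm h₂₀₂.symm hc₀₁ hc₀₂ hc₁₂
    omega
  have n₂ : ¬ G.Adj c₂ b₀₁ := fun h => by
    obtain rfl := hm.eq_of_adj_of_adj_of_adj_s18 h₀ h₁ h₂ h₀₀₁.symm h₁₀₁.symm h.symm hc₀₁ hc₀₂ hc₁₂
    omega
  have cases : ∀ A : Finset (Fin 3), A = ∅ ∨ A = {0} ∨ A = {1} ∨ A = {2} ∨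
      A = {0, 1} ∨ A = {0, 2} ∨ A = {1, 2} ∨ A = {0, 1, 2} := by decide
  refine hasInducedCube_three_of_adj_iff (fun A =>
    if 0 ∈ A then (if 1 ∈ A then (if 2 ∈ A then m else b₀₁) else (if 2 ∈ A then b₀₂ else c₀))
    else (if 1 ∈ A then (if 2 ∈ A then b₁₂ else c₁) else (if 2 ∈ A then c₂ else z))) ?_
  intro A B
  rcases cases A with rfl | rfl | rfl | rfl | rfl | rfl | rfl | rfl <;>
    rcases cases B with rfl | rfl | rfl | rfl | rfl | rfl | rfl | rfl <;>
    simp +decide <;>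
    first
      | assumption
      | (rw [G.adj_comm]; assumption)
      | exact hm.not_adj_of_dist (t := z) (by omega) (by omega)

theorem hasInducedCube_of_three_squares (hm : MedianGraph G) {z c₀ c₁ c₂ b₀₁ b₀₂ b₁₂ : V}
    (h₀ : G.Adj z c₀) (h₁ : G.Adj z c₁) (h₂ : G.Adj z c₂)
    (h₀₀₁ : G.Adj c₀ b₀₁) (h₁₀₁ : G.Adj c₁ b₀₁) (h₀₀₂ : G.Adj c₀ b₀₂) (h₂₀₂ : G.Adj c₂ b₀₂)
    (h₁₁₂ : G.Adj c₁ b₁₂) (h₂₁₂ : G.Adj c₂ b₁₂)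
    (hc₀₁ : c₀ ≠ c₁) (hc₀₂ : c₀ ≠ c₂) (hc₁₂ : c₁ ≠ c₂)
    (d₀₁ : G.dist z b₀₁ = 2) (d₀₂ : G.dist z b₀₂ = 2) (d₁₂ : G.dist z b₁₂ = 2) :
    HasInducedCube G 3 := by
  have ez : G.dist z z = 0 := dist_self
  have apex : ∀ {b}, G.Adj c₀ b → G.Adj c₁ b → G.Adj c₂ b → G.dist z b ≠ 2 := by
    intro b hb₀ hb₁ hb₂
    obtain rfl := hm.eq_of_adj_of_adj_of_adj_s18 h₀ h₁ h₂ hb₀.symm hb₁.symm hb₂.symm hc₀₁ hc₀₂ hc₁₂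
    omega
  have hb₀ : b₀₁ ≠ b₀₂ := by rintro rfl; exact apex h₀₀₁ h₁₀₁ h₂₀₂ d₀₁
  have hb₁ : b₀₁ ≠ b₁₂ := by rintro rfl; exact apex h₀₀₁ h₁₀₁ h₂₁₂ d₀₁
  have hb₂ : b₀₂ ≠ b₁₂ := by rintro rfl; exact apex h₀₀₂ h₁₁₂ h₂₀₂ d₀₂
  -- the eighth vertex is the median of the three square corners
  obtain ⟨m, hm₀₁, hm₀₂, hm₁₂⟩ := hm.exists_adj_adj_adj_of_dist_eq_two
    (hm.dist_eq_two_of_adj_of_adj h₀₀₁ h₀₀₂ hb₀) (hm.dist_eq_two_of_adj_of_adj h₂₀₂ h₂₁₂ hb₂)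
    (hm.dist_eq_two_of_adj_of_adj h₁₀₁ h₁₁₂ hb₁)
  have dm : G.dist z m = 3 := by
    rcases hm.dist_eq_add_one_or_of_adj hm₀₁ z with h | h
    · omega
    have hzm : G.Adj z m := dist_eq_one_iff_adj.mp (by omega)
    have hz : ∀ {b}, G.dist z b = 2 → z ≠ b := fun hb h => by subst h; omega
    rcases hm.eq_or_eq_of_adj_of_adj h₀ h₀₀₁ h₁ h₁₀₁ hc₀₁ (hz d₀₁) hzm hm₀₁.symm with rfl | rfl
    · rcases hm.eq_or_eq_of_adj_of_adj h₁ h₁₁₂ h₂ h₂₁₂ hc₁₂ (hz d₁₂) hzm hm₁₂.symm with h | h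
      <;> simp_all
    · rcases hm.eq_or_eq_of_adj_of_adj h₀ h₀₀₂ h₂ h₂₀₂ hc₀₂ (hz d₀₂) hzm hm₀₂.symm with h | h
      <;> simp_all
  exact hm.hasInducedCube_of_cube_edges h₀ h₁ h₂ h₀₀₁ h₁₀₁ h₀₀₂ h₂₀₂ h₁₁₂ h₂₁₂
    hm₀₁ hm₀₂ hm₁₂ hc₀₁ hc₀₂ hc₁₂ d₀₁ d₀₂ d₁₂ dm

theorem exists_adj_adj_dist_eq_two_of_mem_gInterval (hm : MedianGraph G) {z w a b : V}
    (ha : G.Adj z a) (hb : G.Adj z b) (hab : a ≠ b)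
    (haw : a ∈ gInterval G z w) (hbw : b ∈ gInterval G z w) :
    ∃ s, G.Adj a s ∧ G.Adj b s ∧ G.dist z s = 2 := by
  have haw : G.dist z a + G.dist a w = G.dist z w := haw
  have hbw : G.dist z b + G.dist b w = G.dist z w := hbw
  have e₁ : G.dist z a = 1 := dist_eq_one_iff_adj.mpr ha
  have e₂ : G.dist z b = 1 := dist_eq_one_iff_adj.mpr hb
  have e₃ : G.dist w a = G.dist a w := dist_comm
  have e₄ : G.dist w b = G.dist b w := dist_comm
  obtain ⟨s, has, hbs, hws⟩ :=
    hm.exists_adj_adj_dist_lt (u := w) (hm.dist_eq_two_of_adj_of_adj ha hb hab) (by omega)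
  have e₅ : G.dist s w = G.dist w s := dist_comm
  have h₁ := hm.1.dist_triangle (u := z) (v := s) (w := w)
  have h₂ := hm.1.dist_triangle (u := z) (v := a) (w := s)
  rw [dist_eq_one_iff_adj.mpr has] at h₂
  exact ⟨s, has, hbs, by omega⟩

theorem eq_or_eq_of_adj_mem_gInterval (hm : MedianGraph G) (hcf : CubeFree G) {z w c₀ c₁ c : V}
    (h₀ : G.Adj z c₀) (h₁ : G.Adj z c₁) (h : G.Adj z c) (hw₀ : c₀ ∈ gInterval G z w)
    (hw₁ : c₁ ∈ gInterval G z w) (hw : c ∈ gInterval G z w) (hc₀₁ : c₀ ≠ c₁) :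
    c = c₀ ∨ c = c₁ := by
  by_contra! hc
  obtain ⟨b₀₁, h₀₀₁, h₁₀₁, d₀₁⟩ :=
    hm.exists_adj_adj_dist_eq_two_of_mem_gInterval h₀ h₁ hc₀₁ hw₀ hw₁
  obtain ⟨b₀₂, h₀₀₂, h₂₀₂, d₀₂⟩ :=
    hm.exists_adj_adj_dist_eq_two_of_mem_gInterval h₀ h hc.1.symm hw₀ hw
  obtain ⟨b₁₂, h₁₁₂, h₂₁₂, d₁₂⟩ :=
    hm.exists_adj_adj_dist_eq_two_of_mem_gInterval h₁ h hc.2.symm hw₁ hw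
  exact hcf (hm.hasInducedCube_of_three_squares h₀ h₁ h h₀₀₁ h₁₀₁ h₀₀₂ h₂₀₂ h₁₁₂ h₂₁₂
    hc₀₁ hc.1.symm hc.2.symm d₀₁ d₀₂ d₁₂)

end MedianGraph

section Star

variable {V : Type*} {G : SimpleGraph V}

def squareStar (G : SimpleGraph V) (z : V) : Set V :=
  {v | G.dist z v ≤ 1 ∨ (G.dist z v = 2 ∧
    ∃ p q, p ≠ q ∧ G.Adj z p ∧ G.Adj p v ∧ G.Adj z q ∧ G.Adj q v)}

open Finset in
theorem mem_squareStar_of_cube (hcf : CubeFree G) {d : ℕ} {f : Finset (Fin d) → V}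
    (hinj : Function.Injective f) (hf : ∀ A B, G.Adj (f A) (f B) ↔ #(symmDiff A B) = 1)
    (D : Finset (Fin d)) : f D ∈ squareStar G (f ∅) := by
  classical
  have hcard : ∀ S : Finset (Fin d), #(symmDiff ∅ S) = #S := fun S => by
    rw [← Finset.bot_eq_empty, bot_symmDiff]
  obtain hD | hD | hD | hD : #D = 0 ∨ #D = 1 ∨ #D = 2 ∨ 3 ≤ #D := by omega
  · left
    rw [Finset.card_eq_zero.mp hD, dist_self]
    omega
  · left
    rw [dist_eq_one_iff_adj.mpr ((hf ∅ D).mpr (by rw [hcard, hD]))]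
  · right
    obtain ⟨i, j, hij, rfl⟩ := card_eq_two.mp hD
    have hi : (symmDiff {i} {i, j} : Finset (Fin d)) = {j} := by
      ext k; simp only [Finset.mem_symmDiff, Finset.mem_singleton, Finset.mem_insert]; grind
    have hj : (symmDiff {j} {i, j} : Finset (Fin d)) = {i} := by
      ext k; simp only [Finset.mem_symmDiff, Finset.mem_singleton, Finset.mem_insert]; grind
    have hzp : G.Adj (f ∅) (f {i}) := (hf _ _).mpr (by rw [hcard, Finset.card_singleton])
    have hzq : G.Adj (f ∅) (f {j}) := (hf _ _).mpr (by rw [hcard, Finset.card_singleton])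
    have hpv : G.Adj (f {i}) (f {i, j}) := (hf _ _).mpr (by rw [hi, Finset.card_singleton])
    have hqv : G.Adj (f {j}) (f {i, j}) := (hf _ _).mpr (by rw [hj, Finset.card_singleton])
    have hne : f ∅ ≠ f {i, j} := fun h => Finset.insert_ne_empty _ _ (hinj h).symm
    have hnadj : ¬ G.Adj (f ∅) (f {i, j}) := by rw [hf, hcard, hD]; omega
    have hle := dist_le (Walk.cons hzp (Walk.cons hpv Walk.nil))
    have hlt := (hzp.reachable.trans hpv.reachable).one_lt_dist_of_ne_of_not_adj hne hnadj
    refine ⟨by simp only [Walk.length_cons, Walk.length_nil] at hle; omega,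
      f {i}, f {j}, fun h => hij (singleton_injective (hinj h)), hzp, hpv, hzq, hqv⟩
  · exfalso
    obtain ⟨i, -, j, -, l, -, hij, hil, hjl⟩ := two_lt_card.mp hD
    have he : Function.Injective ![i, j, l] := by
      intro a b hab
      fin_cases a <;> fin_cases b <;> simp_all
    refine hcf ⟨fun B => f (B.image ![i, j, l]), fun B B' h => image_injective he (hinj h),
      fun _ => Set.mem_univ _, fun B B' => ?_⟩
    rw [hf, ← image_symmDiff _ _ he, Finset.card_image_of_injective _ he]

open Finset in
theorem gStar_subset_squareStar (hcf : CubeFree G) (z : V) : gStar G z ⊆ squareStar G z := by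
  rintro _ ⟨d, f, hinj, hf, ⟨A, rfl⟩, ⟨B, rfl⟩⟩
  have h := mem_squareStar_of_cube (f := fun S => f (symmDiff A S)) hcf
    (fun S T h => symmDiff_right_injective A (hinj h))
    (fun S T => by rw [hf, symmDiff_symmDiff_symmDiff_comm, symmDiff_self, bot_symmDiff])
    (symmDiff A B)
  simpa [symmDiff_symmDiff_cancel_left, ← Finset.bot_eq_empty] using h

theorem squareStar_subset_gStar (hm : MedianGraph G) (z : V) : squareStar G z ⊆ gStar G z := by
  rintro v (hv | ⟨hv, p, q, hpq, hzp, hpv, hzq, hqv⟩)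
  · obtain h | h : G.dist z v = 0 ∨ G.dist z v = 1 := by omega
    · obtain rfl := hm.1.dist_eq_zero_iff.mp h
      refine ⟨0, fun _ => z, fun _ _ _ => Subsingleton.elim _ _, fun A B => ?_, ⟨∅, rfl⟩, ⟨∅, rfl⟩⟩
      simp [Subsingleton.elim A B]
    have hzv := dist_eq_one_iff_adj.mp h
    have cases : ∀ A : Finset (Fin 1), A = ∅ ∨ A = {0} := by decide
    refine ⟨1, fun A => if 0 ∈ A then v else z, ?_, ?_, ⟨∅, rfl⟩, ⟨{0}, rfl⟩⟩ <;>
      intro A B <;> rcases cases A with rfl | rfl <;> rcases cases B with rfl | rfl <;>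
      simp +decide
    exacts [hzv.ne, hzv.ne.symm, hzv, hzv.symm]
  · have hzv : z ≠ v := fun h => by subst h; simp at hv
    have hnzv : ¬ G.Adj z v := fun h => by rw [dist_eq_one_iff_adj.mpr h] at hv; omega
    have hnpq : ¬ G.Adj p q := hm.not_adj_of_dist (t := z)
      (by rw [dist_eq_one_iff_adj.mpr hzp, dist_eq_one_iff_adj.mpr hzq]; omega)
      (by rw [dist_eq_one_iff_adj.mpr hzp, dist_eq_one_iff_adj.mpr hzq]; omega)
    have := hzp.ne; have := hzq.ne; have := hpv.ne; have := hqv.ne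
    have cases : ∀ A : Finset (Fin 2), A = ∅ ∨ A = {0} ∨ A = {1} ∨ A = {0, 1} := by decide
    refine ⟨2, fun A => if 0 ∈ A then (if 1 ∈ A then v else p) else (if 1 ∈ A then q else z),
      ?_, ?_, ⟨∅, rfl⟩, ⟨{0, 1}, rfl⟩⟩ <;>
      intro A B <;> rcases cases A with rfl | rfl | rfl | rfl <;>
      rcases cases B with rfl | rfl | rfl | rfl <;> simp +decide <;>
      first
        | assumption
        | exact Ne.symm (by assumption)
        | (rw [G.adj_comm]; assumption)

theorem gStar_eq_squareStar (hm : MedianGraph G) (hcf : CubeFree G) (z : V) :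
    gStar G z = squareStar G z :=
  (gStar_subset_squareStar hcf z).antisymm (squareStar_subset_gStar hm z)

end Star

namespace MedianGraph

variable {V : Type*} {G : SimpleGraph V}

theorem mem_squareStar_of_adj_of_adj (hm : MedianGraph G) {z a b c : V} (hza : G.Adj z a)
    (hb : b ∈ squareStar G z) (hac : G.Adj a c) (hcb : G.dist c b + 1 = G.dist a b) :
    c ∈ squareStar G z := by
  have hc := hm.1
  have e₁ : G.dist z a = 1 := dist_eq_one_iff_adj.mpr hza
  have e₂ : G.dist a z = 1 := dist_eq_one_iff_adj.mpr hza.symm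
  have e₃ : G.dist c a = 1 := dist_eq_one_iff_adj.mpr hac.symm
  have e₄ : G.dist b c = G.dist c b := dist_comm
  have t₁ := hc.dist_triangle (u := z) (v := b) (w := c)
  have t₂ := hc.dist_triangle (u := a) (v := z) (w := b)
  rcases hm.dist_eq_add_one_or_of_adj hac z with hzc | hzc
  swap
  · exact Or.inl (by omega)
  refine Or.inr ⟨by omega, ?_⟩
  rcases hb with hb | ⟨hb, p, q, hpq, hzp, hpb, hzq, hqb⟩
  · have hcb' : G.Adj c b := dist_eq_one_iff_adj.mp (by omega)
    have hzb : G.Adj z b := dist_eq_one_iff_adj.mp (by omega)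
    have hab : a ≠ b := by rintro rfl; rw [SimpleGraph.dist_self] at hcb; omega
    exact ⟨a, b, hab, hza, hac, hzb, hcb'.symm⟩
  · obtain h | h | h : G.dist c b = 0 ∨ G.dist c b = 1 ∨ G.dist c b = 2 := by omega
    · obtain rfl := hc.dist_eq_zero_iff.mp h
      exact ⟨p, q, hpq, hzp, hpb, hzq, hqb⟩
    · exact absurd (dist_eq_one_iff_adj.mp h) (hm.not_adj_of_dist (t := z) (by omega) (by omega))
    · obtain ⟨m, hzm, hcm, hbm⟩ := hm.exists_adj_adj_adj_of_dist_eq_two (by omega) h hb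
      have ham : a ≠ m := by
        rintro rfl
        rw [dist_eq_one_iff_adj.mpr hbm.symm] at hcb
        omega
      exact ⟨a, m, ham, hza, hac, hzm, hcm.symm⟩

theorem mem_squareStar_of_adj_of_square (hm : MedianGraph G) (hcf : CubeFree G)
    {z a b c p q : V} (hza : G.dist z a = 2) (hpq : p ≠ q) (hzp : G.Adj z p) (hpa : G.Adj p a)
    (hzq : G.Adj z q) (hqa : G.Adj q a) (hb : b ∈ squareStar G z) (hac : G.Adj a c)
    (hcb : G.dist c b + 1 = G.dist a b) : c ∈ squareStar G z := by
  have hc := hm.1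
  rcases hm.dist_eq_add_one_or_of_adj hac z with hzc | hzc
  swap
  · exact Or.inl (by omega)
  exfalso
  have e₁ : G.dist a z = 2 := by rw [dist_comm]; exact hza
  have e₂ : G.dist b c = G.dist c b := dist_comm
  have t₁ := hc.dist_triangle (u := z) (v := b) (w := c)
  have t₂ := hc.dist_triangle (u := a) (v := z) (w := b)
  have hI : ∀ {r s}, G.Adj z r → G.Adj r s → G.dist s c ≤ 1 → r ∈ gInterval G z c := by
    intro r s hzr hrs hsc
    have := hc.dist_triangle (u := r) (v := s) (w := c)
    rw [dist_eq_one_iff_adj.mpr hrs] at this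
    exact hc.mem_gInterval_of_add_le (by rw [dist_eq_one_iff_adj.mpr hzr]; omega)
  have hpc := hI hzp hpa (dist_eq_one_iff_adj.mpr hac).le
  have hqc := hI hzq hqa (dist_eq_one_iff_adj.mpr hac).le
  have hpq_only : ∀ {r}, G.Adj z r → r ∈ gInterval G z c → r = p ∨ r = q :=
    fun hzr hrc => hm.eq_or_eq_of_adj_mem_gInterval hcf hzp hzq hzr hpc hqc hrc hpq
  have hadj_a : ∀ {r}, r = p ∨ r = q → G.Adj r a := by rintro r (rfl | rfl) <;> assumption
  rcases hb with hb | ⟨hb, p', q', hpq', hzp', hp'b, hzq', hq'b⟩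
  · have hzb : G.Adj z b := dist_eq_one_iff_adj.mp (by omega)
    have hba := dist_eq_one_iff_adj.mpr
      (hadj_a (hpq_only hzb (hc.mem_gInterval_of_add_le (by omega))))
    have : G.dist a b = G.dist b a := dist_comm
    omega
  have hpar := hm.dist_add_dist_add_dist_mod_two z c b
  obtain h | h : G.dist c b = 1 ∨ G.dist c b = 3 := by omega
  · have hbc : G.dist b c ≤ 1 := by omega
    have hp' := hpq_only hzp' (hI hzp' hp'b hbc)
    have hq' := hpq_only hzq' (hI hzq' hq'b hbc)
    have hne : ∀ {r}, G.Adj z r → r ≠ c := by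
      rintro r hzr rfl
      rw [dist_eq_one_iff_adj.mpr hzr] at hzc
      omega
    -- otherwise `a ≠ b` would share the three neighbours `p'`, `q'`, `c`
    obtain rfl := hm.eq_of_adj_of_adj_of_adj_s18 (hadj_a hp').symm (hadj_a hq').symm hac
      hp'b.symm hq'b.symm (dist_eq_one_iff_adj.mp (by omega)) hpq' (hne hzp') (hne hzq')
    rw [SimpleGraph.dist_self] at hcb
    omega
  · obtain ⟨m, ⟨h₁, h₂, h₃⟩, -⟩ := hm.2 z b c
    have h₁ : G.dist z m + G.dist m b = G.dist z b := h₁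
    have h₂ : G.dist b m + G.dist m c = G.dist b c := h₂
    have h₃ : G.dist c m + G.dist m z = G.dist c z := h₃
    have e₃ : G.dist b m = G.dist m b := dist_comm
    have e₄ : G.dist c m = G.dist m c := dist_comm
    have e₅ : G.dist m z = G.dist z m := dist_comm
    have e₆ : G.dist c z = G.dist z c := dist_comm
    have hzm : G.Adj z m := dist_eq_one_iff_adj.mp (by omega)
    have hma := dist_eq_one_iff_adj.mpr
      (hadj_a (hpq_only hzm (hc.mem_gInterval_of_add_le (by omega))))
    have := hc.dist_triangle (u := a) (v := m) (w := b)
    have : G.dist a m = G.dist m a := dist_comm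
    omega

theorem squareStar_gConvex (hm : MedianGraph G) (hcf : CubeFree G) (z : V) :
    GConvex G (squareStar G z) := by
  refine hm.1.gConvex_of_forall_adj fun a ha b hb c hac hcb => ?_
  rcases ha with ha | ⟨ha, p, q, hpq, hzp, hpa, hzq, hqa⟩
  · obtain h | h : G.dist z a = 0 ∨ G.dist z a = 1 := by omega
    · obtain rfl := hm.1.dist_eq_zero_iff.mp h
      exact Or.inl (dist_eq_one_iff_adj.mpr hac).le
    · exact hm.mem_squareStar_of_adj_of_adj (dist_eq_one_iff_adj.mp h) hb hac hcb
  · exact hm.mem_squareStar_of_adj_of_square hcf ha hpq hzp hpa hzq hqa hb hac hcb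

theorem gated_of_gConvex (hm : MedianGraph G) {S : Set V} (hS : GConvex G S)
    (hne : S.Nonempty) : Gated G S := by
  classical
  intro w
  have hex : ∃ n, ∃ g ∈ S, G.dist w g = n := ⟨_, hne.some, hne.some_mem, rfl⟩
  obtain ⟨g, hgS, hg⟩ := Nat.find_spec hex
  refine ⟨g, hgS, fun h hh => ?_⟩
  obtain ⟨m, ⟨h₁, h₂, h₃⟩, -⟩ := hm.2 w g h
  have h₁ : G.dist w m + G.dist m g = G.dist w g := h₁
  have h₃ : G.dist h m + G.dist m w = G.dist h w := h₃
  -- the median lies in `I(g, h) ⊆ S`, so it cannot be closer to `w` than `g`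
  have := Nat.find_min' hex ⟨m, hS g hgS h hh h₂, rfl⟩
  obtain rfl := hm.1.dist_eq_zero_iff.mp (by omega : G.dist m g = 0)
  have e₁ : G.dist h m = G.dist m h := dist_comm
  have e₂ : G.dist m w = G.dist w m := dist_comm
  have e₃ : G.dist h w = G.dist w h := dist_comm
  omega

theorem gStar_gated (hm : MedianGraph G) (hcf : CubeFree G) (z : V) : Gated G (gStar G z) := by
  rw [gStar_eq_squareStar hm hcf]
  exact hm.gated_of_gConvex (hm.squareStar_gConvex hcf z) ⟨z, Or.inl (by simp)⟩

end MedianGraph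

namespace SimpleGraph.Connected

variable {V : Type*} {G : SimpleGraph V}

theorem isGate_unique {S : Set V} (hc : G.Connected) {v g g' : V}
    (h : IsGate G S v g) (h' : IsGate G S v g') : g = g' := by
  have e := h.2 g' h'.1
  have e' := h'.2 g h.1
  have : G.dist g g' = G.dist g' g := dist_comm
  exact hc.dist_eq_zero_iff.mp (by omega)

theorem exists_mem_imprints_mem_gInterval {A : Set V} (hc : G.Connected) (u : V) {t : V}
    (ht : t ∈ A) : ∃ a ∈ imprints G u A, a ∈ gInterval G u t := by
  classical
  have hex : ∃ n, ∃ a ∈ A ∩ gInterval G u t, G.dist u a = n :=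
    ⟨_, t, ⟨ht, show _ = _ by simp⟩, rfl⟩
  obtain ⟨a, ⟨haA, hat⟩, hmin⟩ := Nat.find_spec hex
  refine ⟨a, ⟨haA, Set.eq_singleton_iff_unique_mem.mpr ⟨⟨show _ = _ by simp, haA⟩, ?_⟩⟩, hat⟩
  rintro b ⟨hba, hbA⟩
  have hba : G.dist u b + G.dist b a = G.dist u a := hba
  have hat : G.dist u a + G.dist a t = G.dist u t := hat
  have h₁ := hc.dist_triangle (u := b) (v := a) (w := t)
  have h₂ := hc.dist_triangle (u := u) (v := b) (w := t)
  have hbt : b ∈ gInterval G u t := show _ = _ by omega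
  have := Nat.find_min' hex ⟨b, ⟨hbA, hbt⟩, rfl⟩
  exact hc.dist_eq_zero_iff.mp (by omega)

theorem mem_totalBdry_of_isGate_fiber {H : Set V} (hc : G.Connected) (hH : Gated G H)
    {x v vp : V} (hvp : IsGate G (fiber G H x) v vp) (hv : v ∉ fiber G H x) :
    vp ∈ totalBdry G H x := by
  have hvpx : IsGate G H vp x := hvp.1
  obtain ⟨n, hn⟩ : ∃ n, G.dist vp v = n + 1 :=
    Nat.exists_eq_succ_of_ne_zero fun h => hv (hc.dist_eq_zero_iff.mp h ▸ hvpx)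
  obtain ⟨w, hvpw, hwv⟩ := hc.exists_adj_dist_eq_of_dist_eq_succ hn
  obtain ⟨g, hwg⟩ := hH w
  have e₁ : G.dist vp w = 1 := dist_eq_one_iff_adj.mpr hvpw
  have e₂ : G.dist w vp = 1 := dist_eq_one_iff_adj.mpr hvpw.symm
  have e₃ : G.dist v w = G.dist w v := dist_comm
  have e₄ : G.dist v vp = G.dist vp v := dist_comm
  have e₅ : G.dist x g = G.dist g x := dist_comm
  have hgx : g ≠ x := by
    rintro rfl
    have := hvp.2 w hwg
    omega
  have h₁ := hvpx.2 g hwg.1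
  have h₂ := hwg.2 x hvpx.1
  have h₃ := hc.dist_triangle (u := vp) (v := w) (w := g)
  have h₄ := hc.dist_triangle (u := w) (v := vp) (w := x)
  have h₅ : G.dist x g ≠ 0 := fun h => hgx (hc.dist_eq_zero_iff.mp h).symm
  -- adding the two gate identities to the triangle inequalities across the edge `vp w`
  -- leaves `2 d(x,g) ≤ 2`
  have hxg : G.Adj x g := dist_eq_one_iff_adj.mp (by omega)
  exact Set.mem_biUnion (x := g) ⟨hwg.1, hxg⟩ ⟨hvpx, w, hwg, hvpw⟩

end SimpleGraph.Connected

theorem dist_one_neighboring_general {V : Type*} (G : SimpleGraph V)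
    (hG : MedianGraph G) (hcf : CubeFree G) (z x y u v u₁ u₂ vp : V)
    (hpanel : G.dist x z = 1) (hcone : G.dist y z = 2)
    (hu : IsGate G (gStar G z) u x) (hv : IsGate G (gStar G z) v y)
    (himp : imprints G u (totalBdry G (gStar G z) x) = {u₁, u₂})
    (hvp : IsGate G (fiber G (gStar G z) x) v vp) :
    G.dist u v =
      min (G.dist u u₁ + G.dist u₁ vp) (G.dist u u₂ + G.dist u₂ vp)
        + G.dist vp v := by
  have hc := hG.1
  have hvx : v ∉ fiber G (gStar G z) x := fun h => by
    obtain rfl := hc.isGate_unique hv h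
    omega
  have hvp_bdry := hc.mem_totalBdry_of_isGate_fiber (hG.gStar_gated hcf z) hvp hvx
  obtain ⟨a, ha, hau⟩ := hc.exists_mem_imprints_mem_gInterval u hvp_bdry
  have ha : a = u₁ ∨ a = u₂ := by rw [himp] at ha; simpa using ha
  have hau : G.dist u a + G.dist a vp = G.dist u vp := hau
  have hsplit := hvp.2 u hu
  have t₁ := hc.dist_triangle (u := u) (v := u₁) (w := vp)
  have t₂ := hc.dist_triangle (u := u) (v := u₂) (w := vp)
  have e₁ : G.dist u v = G.dist v u := dist_comm
  have e₂ : G.dist vp u = G.dist u vp := dist_comm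
  have e₃ : G.dist v vp = G.dist vp v := dist_comm
  rcases ha with rfl | rfl <;> omega

/-- Distance formula for 1-neighboring vertices: `u` in a panel `F(x)`, `v` in a
neighboring cone `F(y)`; `u₁, u₂` the imprints of `u` on `∂*F(x)` and `v⁺` the gate
of `v` in `F(x)`. -/
theorem dist_one_neighboring {V : Type*} (G : SimpleGraph V)
    (hG : MedianGraph G) (hcf : CubeFree G) (z x y u v u₁ u₂ vp : V)
    (hpanel : G.dist x z = 1) (hcone : G.dist y z = 2)
    (hu : IsGate G (gStar G z) u x) (hv : IsGate G (gStar G z) v y)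
    (hnb : Neighboring G (gStar G z) x y)
    (himp : imprints G u (totalBdry G (gStar G z) x) = {u₁, u₂})
    (hvp : IsGate G (fiber G (gStar G z) x) v vp) :
    G.dist u v =
      min (G.dist u u₁ + G.dist u₁ vp) (G.dist u u₂ + G.dist u₂ vp)
        + G.dist vp v :=
  dist_one_neighboring_general G hG hcf z x y u v u₁ u₂ vp hpanel hcone hu hv himp hvp
end
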